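/- arXiv:q-alg/9702011 — 4 statements merged into one kernel-verified Lean document; each statement's English description precedes it below -/
import Mathlib

section
/- Let n ≥ 1 and let q, t be real numbers with 0 < q < 1 and 0 < t < 1. For all 1 ≤ l, m ≤ n, every function f : ℂ^n → ℂ, and every point z = (z_1,…,z_n) ∈ ℂ^n such that q^a z_i ≠ q^b z_j for all i ≠ j and all a, b ∈ {0,1}, the Macdonald operators commute: (D^l(q,t)(D^m(q,t) f))(z) = (D^m(q,t)(D^l(q,t) f))(z). -/
open Polynomial Finset
open scoped symmDiff
set_option maxHeartbeats 1000000

noncomputable section MacKey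

variable {ι : Type*} [DecidableEq ι]

def ph (q t u v : ℂ) : ℂ := ((t*u - v) * (t*v - q*u)) / ((u - v) * (v - q*u))

def Phi (q t : ℂ) (x : ι → ℂ) (S K : Finset ι) : ℂ :=
  ∏ a ∈ K, ∏ b ∈ S \ K, ph q t (x a) (x b)

def ek (q t : ℂ) (x : ι → ℂ) (S : Finset ι) (k : ℕ) : ℂ :=
  ∑ K ∈ S.powersetCard k, Phi q t x S K

def QP (q : ℂ) (x : ι → ℂ) (S' : Finset ι) : Polynomial ℂ :=
  ∏ b ∈ S', ((X - C (x b)) * (C (x b) - C q * X) * (X - C (q * x b)))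

def A1P (q t : ℂ) (x : ι → ℂ) (S' K : Finset ι) : Polynomial ℂ :=
  (∏ b ∈ S' \ K, ((C t * X - C (x b)) * (C (t * x b) - C q * X))) *
    (∏ b ∈ K, ((X - C (x b)) * (C (x b) - C q * X))) * ∏ b ∈ S', (X - C (q * x b))

def A2P (q t : ℂ) (x : ι → ℂ) (S' K : Finset ι) : Polynomial ℂ :=
  (∏ a ∈ K, ((X - C (t * x a)) * (C t * X - C (q * x a)))) *
    (∏ a ∈ S' \ K, ((X - C (x a)) * (X - C (q * x a)))) * ∏ b ∈ S', (C (x b) - C q * X)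

def PP (q t : ℂ) (x : ι → ℂ) (S' : Finset ι) (k : ℕ) : Polynomial ℂ :=
  (∑ K ∈ S'.powersetCard (k-1), C (Phi q t x S' K) * A1P q t x S' K) +
    ∑ K ∈ S'.powersetCard k, C (Phi q t x S' K) * A2P q t x S' K

variable (q t : ℂ) (x : ι → ℂ)

lemma erase_sdiff_of_not_mem {S K : Finset ι} {c : ι} (hc : c ∈ S) (hcK : c ∉ K) :
    S \ K = insert c ((S.erase c) \ K) := by
  ext a
  simp only [mem_sdiff, mem_insert, mem_erase]
  constructor
  · rintro ⟨h1, h2⟩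
    by_cases hac : a = c
    · exact Or.inl hac
    · exact Or.inr ⟨⟨hac, h1⟩, h2⟩
  · rintro (rfl | ⟨⟨_, h1⟩, h2⟩)
    · exact ⟨hc, hcK⟩
    · exact ⟨h1, h2⟩

lemma sdiff_insert_of_erase {S K : Finset ι} {c : ι} (hK : K ⊆ S.erase c) :
    S \ insert c K = (S.erase c) \ K := by
  ext a
  simp only [mem_sdiff, mem_insert, mem_erase, not_or]
  tauto

/-- removing an element not in K from the ground set -/
lemma Phi_erase_not_mem {S K : Finset ι} {c : ι} (hc : c ∈ S) (hcK : c ∉ K) :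
    Phi q t x S K = Phi q t x (S.erase c) K * ∏ a ∈ K, ph q t (x a) (x c) := by
  unfold Phi
  rw [← Finset.prod_mul_distrib]
  refine Finset.prod_congr rfl fun a _ => ?_
  rw [erase_sdiff_of_not_mem hc hcK, Finset.prod_insert (by simp), mul_comm]

/-- removing an element of K from both -/
lemma Phi_insert_mem {S K : Finset ι} {c : ι} (hc : c ∈ S) (hK : K ⊆ S.erase c) :
    Phi q t x S (insert c K) =
      Phi q t x (S.erase c) K * ∏ b ∈ (S.erase c) \ K, ph q t (x c) (x b) := by
  unfold Phi
  rw [Finset.prod_insert (fun h => (Finset.mem_erase.1 (hK h)).1 rfl),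
    sdiff_insert_of_erase hK, mul_comm]

lemma QP_eval (S' : Finset ι) (y : ℂ) :
    (QP q x S').eval y = ∏ b ∈ S', ((y - x b) * (x b - q * y) * (y - q * x b)) := by
  simp [QP, eval_prod]

lemma A1P_eval (S' K : Finset ι) (y : ℂ) :
    (A1P q t x S' K).eval y =
      (∏ b ∈ S' \ K, ((t * y - x b) * (t * x b - q * y))) *
        (∏ b ∈ K, ((y - x b) * (x b - q * y))) * ∏ b ∈ S', (y - q * x b) := by
  simp [A1P, eval_prod]

lemma A2P_eval (S' K : Finset ι) (y : ℂ) :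
    (A2P q t x S' K).eval y =
      (∏ a ∈ K, ((y - t * x a) * (t * y - q * x a))) *
        (∏ a ∈ S' \ K, ((y - x a) * (y - q * x a))) * ∏ b ∈ S', (x b - q * y) := by
  simp [A2P, eval_prod]

lemma ph_mul_cancel {q t u v : ℂ} (h1 : u ≠ v) (h2 : v ≠ q * u) :
    ph q t u v * ((u - v) * (v - q*u)) = (t*u - v) * (t*v - q*u) := by
  unfold ph
  rw [div_mul_cancel₀]
  exact mul_ne_zero (sub_ne_zero.2 h1) (sub_ne_zero.2 h2)

lemma split_helper {K S' : Finset ι} (hK : K ⊆ S') (f g h1 h2 : ι → ℂ)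
    (hin : ∀ a ∈ K, f a * g a = h1 a) (hout : ∀ b ∈ S' \ K, g b = h2 b) :
    (∏ a ∈ K, f a) * ∏ b ∈ S', g b = (∏ a ∈ K, h1 a) * ∏ b ∈ S' \ K, h2 b := by
  rw [← prod_congr rfl hin, ← prod_congr rfl hout, ← prod_sdiff hK, prod_mul_distrib]
  ring

lemma term_nr {S' K : Finset ι} (hK : K ⊆ S') {y : ℂ}
    (hden : ∀ b ∈ S', y ≠ x b ∧ x b ≠ q * y ∧ y ≠ q * x b) :
    (∏ a ∈ K, ph q t (x a) y) * (QP q x S').eval y = (A2P q t x S' K).eval y := by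
  rw [QP_eval, A2P_eval]
  rw [split_helper hK (fun a => ph q t (x a) y) _
      (fun a => (y - t * x a) * (t * y - q * x a) * (x a - q * y))
      (fun b => (y - x b) * (y - q * x b) * (x b - q * y))
      (fun a ha => by
        obtain ⟨d1, d2, d3⟩ := hden a (hK ha)
        linear_combination (-(x a - q*y)) * ph_mul_cancel (q := q) (t := t) (Ne.symm d1) d3)
      (fun b _ => by ring)]
  rw [← prod_sdiff hK (f := fun b => (x b - q*y))]
  simp only [Finset.prod_mul_distrib]
  ring

lemma term_r {S' K : Finset ι} (hK : K ⊆ S') {y : ℂ}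
    (hden : ∀ b ∈ S', y ≠ x b ∧ x b ≠ q * y ∧ y ≠ q * x b) :
    (∏ b ∈ S' \ K, ph q t y (x b)) * (QP q x S').eval y = (A1P q t x S' K).eval y := by
  rw [QP_eval, A1P_eval]
  rw [split_helper (sdiff_subset (s := S') (t := K)) (fun b => ph q t y (x b)) _
      (fun b => (t * y - x b) * (t * x b - q * y) * (y - q * x b))
      (fun b => (y - x b) * (x b - q * y) * (y - q * x b))
      (fun b hb => by
        obtain ⟨d1, d2, d3⟩ := hden b (mem_sdiff.1 hb).1
        linear_combination (y - q * x b) * ph_mul_cancel (q := q) (t := t) d1 d2)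
      (fun b _ => by ring)]
  rw [Finset.sdiff_sdiff_eq_self hK]
  rw [← prod_sdiff hK (f := fun b => (y - q * x b))]
  simp only [Finset.prod_mul_distrib]
  ring

lemma ek_mul_QP {S' : Finset ι} {r : ι} (hr : r ∉ S') (k : ℕ)
    (hden : ∀ b ∈ S', x r ≠ x b ∧ x b ≠ q * x r ∧ x r ≠ q * x b) :
    ek q t x (insert r S') (k+1) * (QP q x S').eval (x r) = (PP q t x S' (k+1)).eval (x r) := by
  have hdisj : Disjoint (S'.powersetCard (k+1)) ((S'.powersetCard k).image (insert r)) := by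
    rw [Finset.disjoint_left]
    rintro A hA hA'
    obtain ⟨K, hK, rfl⟩ := Finset.mem_image.1 hA'
    exact hr ((Finset.mem_powersetCard.1 hA).1 (mem_insert_self r K))
  have hinj : ∀ K1 ∈ S'.powersetCard k, ∀ K2 ∈ S'.powersetCard k,
      insert r K1 = insert r K2 → K1 = K2 := by
    intro K1 h1 K2 h2 h
    have hr1 : r ∉ K1 := fun hh => hr ((Finset.mem_powersetCard.1 h1).1 hh)
    have hr2 : r ∉ K2 := fun hh => hr ((Finset.mem_powersetCard.1 h2).1 hh)
    rw [← Finset.erase_insert hr1, h, Finset.erase_insert hr2]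
  unfold ek PP
  rw [Finset.powersetCard_succ_insert hr, Finset.sum_union hdisj, Finset.sum_image hinj]
  simp only [Nat.add_sub_cancel]
  rw [add_mul, Finset.sum_mul, Finset.sum_mul, eval_add, eval_finset_sum, eval_finset_sum,
    add_comm]
  congr 1
  · refine Finset.sum_congr rfl fun K hK => ?_
    obtain ⟨hKs, hKc⟩ := Finset.mem_powersetCard.1 hK
    rw [eval_mul, eval_C]
    rw [Phi_insert_mem q t x (mem_insert_self r S') (by rwa [Finset.erase_insert hr]),
      Finset.erase_insert hr, mul_assoc]
    congr 1
    exact term_r q t x hKs hden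
  · refine Finset.sum_congr rfl fun K hK => ?_
    obtain ⟨hKs, hKc⟩ := Finset.mem_powersetCard.1 hK
    rw [eval_mul, eval_C]
    have hrK : r ∉ K := fun h => hr (hKs h)
    rw [Phi_erase_not_mem q t x (mem_insert_self r S') hrK, Finset.erase_insert hr, mul_assoc]
    congr 1
    exact term_nr q t x hKs hden

lemma pair_cancel {S' : Finset ι} {c : ι} (hc : c ∈ S') {K : Finset ι} (hK : K ⊆ S'.erase c)
    (hgen : ∀ a ∈ S', ∀ b ∈ S', a ≠ b → x a ≠ x b ∧ x a ≠ q * x b) :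
    Phi q t x S' K * (A1P q t x S' K).eval (x c)
      + Phi q t x S' (insert c K) * (A2P q t x S' (insert c K)).eval (x c) = 0 := by
  have hcK : c ∉ K := fun h => (Finset.mem_erase.1 (hK h)).1 rfl
  have hKS' : K ⊆ S' := hK.trans (Finset.erase_subset c S')
  have hcU : c ∉ S'.erase c \ K := fun h => (Finset.mem_erase.1 (Finset.mem_sdiff.1 h).1).1 rfl
  rw [Phi_erase_not_mem q t x hc hcK, Phi_insert_mem q t x hc hK, A1P_eval, A2P_eval,
    sdiff_insert_of_erase hK, erase_sdiff_of_not_mem hc hcK,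
    Finset.prod_insert hcU, Finset.prod_insert hcK]
  have hsplitA : ∏ b ∈ S', (x c - q * x b)
      = (x c - q * x c) * ((∏ b ∈ S'.erase c \ K, (x c - q * x b)) * ∏ b ∈ K, (x c - q * x b)) := by
    rw [Finset.prod_sdiff hK,
      ← Finset.prod_insert (f := fun b => x c - q * x b) (notMem_erase c S'),
      Finset.insert_erase hc]
  have hsplitB : ∏ b ∈ S', (x b - q * x c)
      = (x c - q * x c) * ((∏ b ∈ S'.erase c \ K, (x b - q * x c)) * ∏ b ∈ K, (x b - q * x c)) := by
    rw [Finset.prod_sdiff hK,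
      ← Finset.prod_insert (f := fun b => x b - q * x c) (notMem_erase c S'),
      Finset.insert_erase hc]
  rw [hsplitA, hsplitB]
  have E1 : (∏ a ∈ K, ph q t (x a) (x c)) *
      ((∏ b ∈ K, ((x c - x b) * (x b - q * x c))) * ∏ b ∈ K, (x c - q * x b))
      = ∏ a ∈ K, ((x c - t * x a) * (t * x c - q * x a) * (x a - q * x c)) := by
    rw [← Finset.prod_mul_distrib, ← Finset.prod_mul_distrib]
    refine Finset.prod_congr rfl fun a ha => ?_
    have hmem := (Finset.mem_erase.1 (hK ha))
    obtain ⟨d1, _⟩ := hgen a hmem.2 c hc hmem.1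
    obtain ⟨_, d2⟩ := hgen c hc a hmem.2 (Ne.symm hmem.1)
    linear_combination (-(x a - q * x c)) * ph_mul_cancel (q := q) (t := t) d1 d2
  have E2 : (∏ b ∈ S'.erase c \ K, ph q t (x c) (x b)) *
      ((∏ b ∈ S'.erase c \ K, ((x c - x b) * (x c - q * x b))) * ∏ b ∈ S'.erase c \ K, (x b - q * x c))
      = ∏ b ∈ S'.erase c \ K, ((t * x c - x b) * (t * x b - q * x c) * (x c - q * x b)) := by
    rw [← Finset.prod_mul_distrib, ← Finset.prod_mul_distrib]
    refine Finset.prod_congr rfl fun b hb => ?_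
    have hmem := Finset.mem_sdiff.1 hb
    have hbc : c ≠ b := fun h => (Finset.mem_erase.1 hmem.1).1 h.symm
    obtain ⟨d1, _⟩ := hgen c hc b ((Finset.mem_erase.1 hmem.1).2) hbc
    obtain ⟨_, d2⟩ := hgen b ((Finset.mem_erase.1 hmem.1).2) c hc (Ne.symm hbc)
    linear_combination (x c - q * x b) * ph_mul_cancel (q := q) (t := t) d1 d2
  have D1s : ∏ a ∈ K, ((x c - t * x a) * (t * x c - q * x a) * (x a - q * x c))
      = (∏ a ∈ K, ((x c - t * x a) * (t * x c - q * x a))) * ∏ a ∈ K, (x a - q * x c) :=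
    Finset.prod_mul_distrib
  have D2s : ∏ b ∈ S'.erase c \ K, ((t * x c - x b) * (t * x b - q * x c) * (x c - q * x b))
      = (∏ b ∈ S'.erase c \ K, ((t * x c - x b) * (t * x b - q * x c))) *
        ∏ b ∈ S'.erase c \ K, (x c - q * x b) :=
    Finset.prod_mul_distrib
  linear_combination
    (Phi q t x (S'.erase c) K * ((t * x c - x c) * (t * x c - q * x c)) * (x c - q * x c) *
      ((∏ b ∈ S'.erase c \ K, ((t * x c - x b) * (t * x b - q * x c))) *
        ∏ b ∈ S'.erase c \ K, (x c - q * x b))) * E1 +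
    (Phi q t x (S'.erase c) K * ((t * x c - x c) * (t * x c - q * x c)) * (x c - q * x c) *
      ((∏ b ∈ S'.erase c \ K, ((t * x c - x b) * (t * x b - q * x c))) *
        ∏ b ∈ S'.erase c \ K, (x c - q * x b))) * D1s +
    (Phi q t x (S'.erase c) K * ((x c - t * x c) * (t * x c - q * x c)) * (x c - q * x c) *
      ((∏ a ∈ K, ((x c - t * x a) * (t * x c - q * x a))) *
        ∏ a ∈ K, (x a - q * x c))) * E2 +
    (Phi q t x (S'.erase c) K * ((x c - t * x c) * (t * x c - q * x c)) * (x c - q * x c) *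
      ((∏ a ∈ K, ((x c - t * x a) * (t * x c - q * x a))) *
        ∏ a ∈ K, (x a - q * x c))) * D2s

lemma A1P_eval_mem {S' K : Finset ι} {c : ι} (hcK : c ∈ K) :
    (A1P q t x S' K).eval (x c) = 0 := by
  rw [A1P_eval]
  have : ∏ b ∈ K, ((x c - x b) * (x b - q * x c)) = 0 :=
    Finset.prod_eq_zero hcK (by rw [sub_self, zero_mul])
  rw [this, mul_zero, zero_mul]

lemma A2P_eval_not_mem {S' K : Finset ι} {c : ι} (hc : c ∈ S') (hcK : c ∉ K) :
    (A2P q t x S' K).eval (x c) = 0 := by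
  rw [A2P_eval]
  have : ∏ a ∈ S' \ K, ((x c - x a) * (x c - q * x a)) = 0 :=
    Finset.prod_eq_zero (Finset.mem_sdiff.2 ⟨hc, hcK⟩) (by rw [sub_self, zero_mul])
  rw [this, mul_zero, zero_mul]

lemma PP_eval_xc {S' : Finset ι} {c : ι} (hc : c ∈ S') (k : ℕ)
    (hgen : ∀ a ∈ S', ∀ b ∈ S', a ≠ b → x a ≠ x b ∧ x a ≠ q * x b) :
    (PP q t x S' (k+1)).eval (x c) = 0 := by
  unfold PP
  simp only [Nat.add_sub_cancel]
  rw [eval_add, eval_finset_sum, eval_finset_sum]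
  have hinj : ∀ K1 ∈ (S'.erase c).powersetCard k, ∀ K2 ∈ (S'.erase c).powersetCard k,
      insert c K1 = insert c K2 → K1 = K2 := by
    intro K1 h1 K2 h2 h
    have hr1 : c ∉ K1 := fun hh => (Finset.mem_erase.1 ((Finset.mem_powersetCard.1 h1).1 hh)).1 rfl
    have hr2 : c ∉ K2 := fun hh => (Finset.mem_erase.1 ((Finset.mem_powersetCard.1 h2).1 hh)).1 rfl
    rw [← Finset.erase_insert hr1, h, Finset.erase_insert hr2]
  have hsum1 : ∑ K ∈ S'.powersetCard k, (C (Phi q t x S' K) * A1P q t x S' K).eval (x c)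
      = ∑ K ∈ (S'.erase c).powersetCard k, (C (Phi q t x S' K) * A1P q t x S' K).eval (x c) := by
    refine (Finset.sum_subset (Finset.powersetCard_mono (Finset.erase_subset c S')) ?_).symm
    intro K hK hK'
    obtain ⟨hKs, hKc⟩ := Finset.mem_powersetCard.1 hK
    have hcK : c ∈ K := by
      by_contra hcK
      exact hK' (Finset.mem_powersetCard.2 ⟨Finset.subset_erase.2 ⟨hKs, hcK⟩, hKc⟩)
    rw [eval_mul, A1P_eval_mem q t x hcK, mul_zero]
  have hsum2 : ∑ K ∈ S'.powersetCard (k+1), (C (Phi q t x S' K) * A2P q t x S' K).eval (x c)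
      = ∑ K ∈ (S'.erase c).powersetCard k,
          (C (Phi q t x S' (insert c K)) * A2P q t x S' (insert c K)).eval (x c) := by
    rw [← Finset.sum_image (f := fun K => (C (Phi q t x S' K) * A2P q t x S' K).eval (x c)) (g := insert c) hinj]
    refine (Finset.sum_subset ?_ ?_).symm
    · intro K hK
      obtain ⟨K', hK', rfl⟩ := Finset.mem_image.1 hK
      obtain ⟨hKs, hKc⟩ := Finset.mem_powersetCard.1 hK'
      have hcK' : c ∉ K' := fun hh => (Finset.mem_erase.1 (hKs hh)).1 rfl
      exact Finset.mem_powersetCard.2 ⟨Finset.insert_subset hc (hKs.trans (Finset.erase_subset c S')),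
        by rw [Finset.card_insert_of_notMem hcK', hKc]⟩
    · intro K hK hK'
      obtain ⟨hKs, hKc⟩ := Finset.mem_powersetCard.1 hK
      have hcK : c ∉ K := by
        intro hcK
        refine hK' (Finset.mem_image.2 ⟨K.erase c, Finset.mem_powersetCard.2
          ⟨Finset.erase_subset_erase c hKs, ?_⟩, Finset.insert_erase hcK⟩)
        rw [Finset.card_erase_of_mem hcK, hKc]
        omega
      rw [eval_mul, A2P_eval_not_mem q t x hc hcK, mul_zero]
  rw [hsum1, hsum2, ← Finset.sum_add_distrib]
  refine Finset.sum_eq_zero fun K hK => ?_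
  obtain ⟨hKs, hKc⟩ := Finset.mem_powersetCard.1 hK
  simpa [eval_mul, eval_C] using pair_cancel q t x hc hKs hgen

lemma A1P_eval_qxc {S' K : Finset ι} {c : ι} (hc : c ∈ S') :
    (A1P q t x S' K).eval (q * x c) = 0 := by
  rw [A1P_eval]
  have : ∏ b ∈ S', (q * x c - q * x b) = 0 :=
    Finset.prod_eq_zero hc (by rw [sub_self])
  rw [this, mul_zero]

lemma A2P_eval_qxc_notmem {S' K : Finset ι} {c : ι} (hc : c ∈ S') (hcK : c ∉ K) :
    (A2P q t x S' K).eval (q * x c) = 0 := by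
  rw [A2P_eval]
  have : ∏ a ∈ S' \ K, ((q * x c - x a) * (q * x c - q * x a)) = 0 :=
    Finset.prod_eq_zero (Finset.mem_sdiff.2 ⟨hc, hcK⟩) (by rw [sub_self, mul_zero])
  rw [this, mul_zero, zero_mul]

lemma A2P_eval_y {S' K : Finset ι} {c : ι} (hc : c ∈ S') {y : ℂ} (hy : q * y = x c) :
    (A2P q t x S' K).eval y = 0 := by
  rw [A2P_eval]
  have : ∏ b ∈ S', (x b - q * y) = 0 :=
    Finset.prod_eq_zero hc (by rw [hy, sub_self])
  rw [this, mul_zero]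

lemma A1P_eval_y_mem {S' K : Finset ι} {c : ι} (hcK : c ∈ K) {y : ℂ} (hy : q * y = x c) :
    (A1P q t x S' K).eval y = 0 := by
  rw [A1P_eval]
  have : ∏ b ∈ K, ((y - x b) * (x b - q * y)) = 0 :=
    Finset.prod_eq_zero hcK (by rw [hy, sub_self, mul_zero])
  rw [this, mul_zero, zero_mul]

/-- constant-extraction at `q * x c` for A2-terms -/
lemma cfA2 {S' : Finset ι} {c : ι} (hc : c ∈ S') {K : Finset ι} (hK : K ⊆ S'.erase c)
    (hgen : ∀ a ∈ S', ∀ b ∈ S', a ≠ b → x a ≠ x b ∧ x a ≠ q * x b) :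
    Phi q t x S' (insert c K) * (A2P q t x S' (insert c K)).eval (q * x c)
      = (((q * x c - t * x c) * (t * (q * x c) - q * x c)) *
          (∏ b ∈ S', (x b - q * (q * x c))) *
          ∏ d ∈ S'.erase c, ((q * x c - t * x d) * (t * (q * x c) - q * x d))) *
        Phi q t x (S'.erase c) K := by
  have hcK : c ∉ K := fun h => (Finset.mem_erase.1 (hK h)).1 rfl
  rw [Phi_insert_mem q t x hc hK, A2P_eval, sdiff_insert_of_erase hK,
    Finset.prod_insert hcK]
  have E2 : (∏ b ∈ S'.erase c \ K, ph q t (x c) (x b)) *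
      ∏ b ∈ S'.erase c \ K, ((q * x c - x b) * (q * x c - q * x b))
      = ∏ b ∈ S'.erase c \ K, ((q * x c - t * x b) * (t * (q * x c) - q * x b)) := by
    rw [← Finset.prod_mul_distrib]
    refine Finset.prod_congr rfl fun b hb => ?_
    have hmem := Finset.mem_sdiff.1 hb
    have hbS : b ∈ S' := (Finset.mem_erase.1 hmem.1).2
    have hbc : c ≠ b := fun h => (Finset.mem_erase.1 hmem.1).1 h.symm
    obtain ⟨d1, _⟩ := hgen c hc b hbS hbc
    obtain ⟨_, d2⟩ := hgen b hbS c hc (Ne.symm hbc)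
    linear_combination (-q) * ph_mul_cancel (q := q) (t := t) d1 d2
  have hsplit : ∏ d ∈ S'.erase c, ((q * x c - t * x d) * (t * (q * x c) - q * x d))
      = (∏ d ∈ S'.erase c \ K, ((q * x c - t * x d) * (t * (q * x c) - q * x d))) *
        ∏ d ∈ K, ((q * x c - t * x d) * (t * (q * x c) - q * x d)) :=
    (Finset.prod_sdiff hK).symm
  rw [hsplit]
  linear_combination (Phi q t x (S'.erase c) K * (((q * x c - t * x c) * (t * (q * x c) - q * x c)) *
    (∏ b ∈ S', (x b - q * (q * x c))) *
    ∏ d ∈ K, ((q * x c - t * x d) * (t * (q * x c) - q * x d)))) * E2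

/-- constant-extraction at `y = x c / q` for A1-terms -/
lemma cfA1 {S' : Finset ι} {c : ι} (hc : c ∈ S') {K : Finset ι} (hK : K ⊆ S'.erase c)
    {y : ℂ} (hy : q * y = x c) (hq : q ≠ 0)
    (hgen : ∀ a ∈ S', ∀ b ∈ S', a ≠ b → x a ≠ x b ∧ x a ≠ q * x b) :
    Phi q t x S' K * (A1P q t x S' K).eval y
      = (((t * y - x c) * (t * x c - q * y)) * (∏ b ∈ S', (y - q * x b)) *
          ∏ d ∈ S'.erase c, ((t * y - x d) * (t * x d - q * y))) *
        Phi q t x (S'.erase c) K := by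
  have hcK : c ∉ K := fun h => (Finset.mem_erase.1 (hK h)).1 rfl
  have hcU : c ∉ S'.erase c \ K := fun h => (Finset.mem_erase.1 (Finset.mem_sdiff.1 h).1).1 rfl
  rw [Phi_erase_not_mem q t x hc hcK, A1P_eval, erase_sdiff_of_not_mem hc hcK,
    Finset.prod_insert hcU]
  have E1 : (∏ a ∈ K, ph q t (x a) (x c)) * ∏ a ∈ K, ((y - x a) * (x a - q * y))
      = ∏ a ∈ K, ((t * y - x a) * (t * x a - q * y)) := by
    rw [← Finset.prod_mul_distrib]
    refine Finset.prod_congr rfl fun a ha => ?_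
    have hmem := Finset.mem_erase.1 (hK ha)
    obtain ⟨d1, _⟩ := hgen a hmem.2 c hc hmem.1
    obtain ⟨_, d2⟩ := hgen c hc a hmem.2 (Ne.symm hmem.1)
    refine mul_left_cancel₀ hq ?_
    linear_combination ph_mul_cancel (q := q) (t := t) d1 d2 +
      (-(ph q t (x a) (x c) * (x c + q * y - (1+q) * x a) +
        (-(t * x c) + (t^2 + q) * x a - q * t * y))) * hy
  have hsplit : ∏ d ∈ S'.erase c, ((t * y - x d) * (t * x d - q * y))
      = (∏ d ∈ S'.erase c \ K, ((t * y - x d) * (t * x d - q * y))) *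
        ∏ d ∈ K, ((t * y - x d) * (t * x d - q * y)) :=
    (Finset.prod_sdiff hK).symm
  rw [hsplit]
  linear_combination (Phi q t x (S'.erase c) K * (((t * y - x c) * (t * x c - q * y)) *
    (∏ b ∈ S', (y - q * x b)) *
    ∏ d ∈ S'.erase c \ K, ((t * y - x d) * (t * x d - q * y)))) * E1

lemma PP_eval_qxc {S' : Finset ι} {c : ι} (hc : c ∈ S') (k : ℕ)
    (hgen : ∀ a ∈ S', ∀ b ∈ S', a ≠ b → x a ≠ x b ∧ x a ≠ q * x b) :
    (PP q t x S' (k+1)).eval (q * x c)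
      = (((q * x c - t * x c) * (t * (q * x c) - q * x c)) *
          (∏ b ∈ S', (x b - q * (q * x c))) *
          ∏ d ∈ S'.erase c, ((q * x c - t * x d) * (t * (q * x c) - q * x d))) *
        ek q t x (S'.erase c) k := by
  unfold PP
  simp only [Nat.add_sub_cancel]
  rw [eval_add, eval_finset_sum, eval_finset_sum]
  have hz1 : ∑ K ∈ S'.powersetCard k, (C (Phi q t x S' K) * A1P q t x S' K).eval (q * x c) = 0 :=
    Finset.sum_eq_zero fun K _ => by rw [eval_mul, A1P_eval_qxc q t x hc, mul_zero]
  have hinj : ∀ K1 ∈ (S'.erase c).powersetCard k, ∀ K2 ∈ (S'.erase c).powersetCard k,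
      insert c K1 = insert c K2 → K1 = K2 := by
    intro K1 h1 K2 h2 h
    have hr1 : c ∉ K1 := fun hh => (Finset.mem_erase.1 ((Finset.mem_powersetCard.1 h1).1 hh)).1 rfl
    have hr2 : c ∉ K2 := fun hh => (Finset.mem_erase.1 ((Finset.mem_powersetCard.1 h2).1 hh)).1 rfl
    rw [← Finset.erase_insert hr1, h, Finset.erase_insert hr2]
  have hsum2 : ∑ K ∈ S'.powersetCard (k+1), (C (Phi q t x S' K) * A2P q t x S' K).eval (q * x c)
      = ∑ K ∈ (S'.erase c).powersetCard k,
          (C (Phi q t x S' (insert c K)) * A2P q t x S' (insert c K)).eval (q * x c) := by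
    rw [← Finset.sum_image (f := fun K => (C (Phi q t x S' K) * A2P q t x S' K).eval (q * x c))
      (g := insert c) hinj]
    refine (Finset.sum_subset ?_ ?_).symm
    · intro K hK
      obtain ⟨K', hK', rfl⟩ := Finset.mem_image.1 hK
      obtain ⟨hKs, hKc⟩ := Finset.mem_powersetCard.1 hK'
      have hcK' : c ∉ K' := fun hh => (Finset.mem_erase.1 (hKs hh)).1 rfl
      exact Finset.mem_powersetCard.2 ⟨Finset.insert_subset hc (hKs.trans (Finset.erase_subset c S')),
        by rw [Finset.card_insert_of_notMem hcK', hKc]⟩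
    · intro K hK hK'
      obtain ⟨hKs, hKc⟩ := Finset.mem_powersetCard.1 hK
      have hcK : c ∉ K := by
        intro hcK
        refine hK' (Finset.mem_image.2 ⟨K.erase c, Finset.mem_powersetCard.2
          ⟨Finset.erase_subset_erase c hKs, ?_⟩, Finset.insert_erase hcK⟩)
        rw [Finset.card_erase_of_mem hcK, hKc]
        omega
      rw [eval_mul, A2P_eval_qxc_notmem q t x hc hcK, mul_zero]
  rw [hz1, hsum2, zero_add]
  unfold ek
  rw [Finset.mul_sum]
  refine Finset.sum_congr rfl fun K hK => ?_
  obtain ⟨hKs, _⟩ := Finset.mem_powersetCard.1 hK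
  rw [eval_mul, eval_C]
  exact cfA2 q t x hc hKs hgen

lemma PP_eval_y {S' : Finset ι} {c : ι} (hc : c ∈ S') {y : ℂ} (hy : q * y = x c)
    (hq : q ≠ 0) (k : ℕ)
    (hgen : ∀ a ∈ S', ∀ b ∈ S', a ≠ b → x a ≠ x b ∧ x a ≠ q * x b) :
    (PP q t x S' (k+1)).eval y
      = (((t * y - x c) * (t * x c - q * y)) * (∏ b ∈ S', (y - q * x b)) *
          ∏ d ∈ S'.erase c, ((t * y - x d) * (t * x d - q * y))) *
        ek q t x (S'.erase c) k := by
  unfold PP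
  simp only [Nat.add_sub_cancel]
  rw [eval_add, eval_finset_sum, eval_finset_sum]
  have hz2 : ∑ K ∈ S'.powersetCard (k+1), (C (Phi q t x S' K) * A2P q t x S' K).eval y = 0 :=
    Finset.sum_eq_zero fun K _ => by rw [eval_mul, A2P_eval_y q t x hc hy, mul_zero]
  have hsum1 : ∑ K ∈ S'.powersetCard k, (C (Phi q t x S' K) * A1P q t x S' K).eval y
      = ∑ K ∈ (S'.erase c).powersetCard k, (C (Phi q t x S' K) * A1P q t x S' K).eval y := by
    refine (Finset.sum_subset (Finset.powersetCard_mono (Finset.erase_subset c S')) ?_).symm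
    intro K hK hK'
    obtain ⟨hKs, hKc⟩ := Finset.mem_powersetCard.1 hK
    have hcK : c ∈ K := by
      by_contra hcK
      exact hK' (Finset.mem_powersetCard.2 ⟨Finset.subset_erase.2 ⟨hKs, hcK⟩, hKc⟩)
    rw [eval_mul, A1P_eval_y_mem q t x hcK hy, mul_zero]
  rw [hz2, hsum1, add_zero]
  unfold ek
  rw [Finset.mul_sum]
  refine Finset.sum_congr rfl fun K hK => ?_
  obtain ⟨hKs, _⟩ := Finset.mem_powersetCard.1 hK
  rw [eval_mul, eval_C]
  exact cfA1 q t x hc hKs hy hq hgen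

lemma lin_tc {t a : ℂ} (ht : t ≠ 0) :
    (C t * X - C a : Polynomial ℂ).natDegree = 1 ∧ (C t * X - C a).leadingCoeff = t := by
  have h : (C t * X - C a : Polynomial ℂ) = C t * X + C (-a) := by rw [map_neg]; ring
  rw [h]
  exact ⟨natDegree_linear ht, leadingCoeff_linear ht⟩

lemma lin_q {q a : ℂ} (hq : q ≠ 0) :
    (C a - C q * X : Polynomial ℂ).natDegree = 1 ∧ (C a - C q * X).leadingCoeff = -q := by
  have h : (C a - C q * X : Polynomial ℂ) = C (-q) * X + C a := by rw [map_neg]; ring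
  rw [h]
  exact ⟨natDegree_linear (neg_ne_zero.2 hq), leadingCoeff_linear (neg_ne_zero.2 hq)⟩

lemma lin_x {a : ℂ} : (X - C a : Polynomial ℂ).natDegree = 1 ∧ (X - C a).leadingCoeff = 1 :=
  ⟨natDegree_X_sub_C a, (monic_X_sub_C a).leadingCoeff⟩

lemma mul2_deg {p r : Polynomial ℂ} {cp cr : ℂ} (hp : p.natDegree = 1 ∧ p.leadingCoeff = cp)
    (hr : r.natDegree = 1 ∧ r.leadingCoeff = cr) (hcp : cp ≠ 0) (hcr : cr ≠ 0) :
    (p * r).natDegree = 2 ∧ (p * r).leadingCoeff = cp * cr := by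
  have hp0 : p ≠ 0 := leadingCoeff_ne_zero.1 (hp.2 ▸ hcp)
  have hr0 : r ≠ 0 := leadingCoeff_ne_zero.1 (hr.2 ▸ hcr)
  refine ⟨?_, by rw [leadingCoeff_mul, hp.2, hr.2]⟩
  rw [natDegree_mul hp0 hr0, hp.1, hr.1]

lemma prod_deg_lc {s : Finset ι} (f : ι → Polynomial ℂ) (d : ℕ) (c : ι → ℂ)
    (h : ∀ i ∈ s, (f i).natDegree = d ∧ (f i).leadingCoeff = c i ∧ c i ≠ 0) :
    (∏ i ∈ s, f i).natDegree = s.card * d ∧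
      (∏ i ∈ s, f i).leadingCoeff = ∏ i ∈ s, c i := by
  constructor
  · rw [natDegree_prod _ _ (fun i hi => leadingCoeff_ne_zero.1
      (((h i hi).2.1) ▸ (h i hi).2.2))]
    rw [Finset.sum_congr rfl (fun i hi => (h i hi).1), Finset.sum_const, smul_eq_mul]
  · rw [leadingCoeff_prod]
    exact Finset.prod_congr rfl fun i hi => (h i hi).2.1

lemma A1P_deg {q t : ℂ} (hq : q ≠ 0) (ht : t ≠ 0) {S' K : Finset ι} (hK : K ⊆ S') :
    (A1P q t x S' K).natDegree = 3 * S'.card ∧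
      (A1P q t x S' K).leadingCoeff = t ^ (S'.card - K.card) * (-q) ^ S'.card := by
  have h1 := prod_deg_lc (s := S' \ K)
    (fun b => (C t * X - C (x b)) * (C (t * x b) - C q * X)) 2 (fun _ => t * (-q))
    (fun b _ => ⟨(mul2_deg (lin_tc ht) (lin_q hq) ht (neg_ne_zero.2 hq)).1,
      (mul2_deg (lin_tc ht) (lin_q hq) ht (neg_ne_zero.2 hq)).2,
      mul_ne_zero ht (neg_ne_zero.2 hq)⟩)
  have h2 := prod_deg_lc (s := K)
    (fun b => (X - C (x b)) * (C (x b) - C q * X)) 2 (fun _ => 1 * (-q))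
    (fun b _ => ⟨(mul2_deg lin_x (lin_q hq) one_ne_zero (neg_ne_zero.2 hq)).1,
      (mul2_deg lin_x (lin_q hq) one_ne_zero (neg_ne_zero.2 hq)).2,
      mul_ne_zero one_ne_zero (neg_ne_zero.2 hq)⟩)
  have h3 := prod_deg_lc (s := S') (fun b => (X - C (q * x b))) 1 (fun _ => 1)
    (fun b _ => ⟨lin_x.1, lin_x.2, one_ne_zero⟩)
  have hz1 : (∏ b ∈ S' \ K, ((C t * X - C (x b)) * (C (t * x b) - C q * X))) ≠ 0 :=
    leadingCoeff_ne_zero.1 (by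
      rw [h1.2, Finset.prod_const]
      exact pow_ne_zero _ (mul_ne_zero ht (neg_ne_zero.2 hq)))
  have hz2 : (∏ b ∈ K, ((X - C (x b)) * (C (x b) - C q * X))) ≠ 0 :=
    leadingCoeff_ne_zero.1 (by
      rw [h2.2, Finset.prod_const]
      exact pow_ne_zero _ (mul_ne_zero one_ne_zero (neg_ne_zero.2 hq)))
  have hz3 : (∏ b ∈ S', (X - C (q * x b)) : Polynomial ℂ) ≠ 0 :=
    leadingCoeff_ne_zero.1 (by rw [h3.2, Finset.prod_const]; simp)
  have hcard : (S' \ K).card = S'.card - K.card := Finset.card_sdiff_of_subset hK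
  have hle : K.card ≤ S'.card := Finset.card_le_card hK
  constructor
  · unfold A1P
    rw [natDegree_mul (mul_ne_zero hz1 hz2) hz3, natDegree_mul hz1 hz2, h1.1, h2.1, h3.1, hcard]
    omega
  · unfold A1P
    rw [leadingCoeff_mul, leadingCoeff_mul, h1.2, h2.2, h3.2, Finset.prod_const,
      Finset.prod_const, Finset.prod_const, hcard, one_pow, mul_one]
    rw [mul_pow, mul_pow, one_pow, one_mul]
    rw [mul_assoc, ← pow_add]
    congr 2
    omega

lemma A2P_deg {q t : ℂ} (hq : q ≠ 0) (ht : t ≠ 0) {S' K : Finset ι} (hK : K ⊆ S') :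
    (A2P q t x S' K).natDegree = 3 * S'.card ∧
      (A2P q t x S' K).leadingCoeff = t ^ K.card * (-q) ^ S'.card := by
  have h1 := prod_deg_lc (s := K)
    (fun a => (X - C (t * x a)) * (C t * X - C (q * x a))) 2 (fun _ => 1 * t)
    (fun b _ => ⟨(mul2_deg lin_x (lin_tc ht) one_ne_zero ht).1,
      (mul2_deg lin_x (lin_tc ht) one_ne_zero ht).2, mul_ne_zero one_ne_zero ht⟩)
  have h2 := prod_deg_lc (s := S' \ K)
    (fun a => (X - C (x a)) * (X - C (q * x a))) 2 (fun _ => 1 * 1)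
    (fun b _ => ⟨(mul2_deg lin_x lin_x one_ne_zero one_ne_zero).1,
      (mul2_deg lin_x lin_x one_ne_zero one_ne_zero).2,
      mul_ne_zero one_ne_zero one_ne_zero⟩)
  have h3 := prod_deg_lc (s := S') (fun b => (C (x b) - C q * X)) 1 (fun _ => -q)
    (fun b _ => ⟨(lin_q hq).1, (lin_q hq).2, neg_ne_zero.2 hq⟩)
  have hz1 : (∏ a ∈ K, ((X - C (t * x a)) * (C t * X - C (q * x a)))) ≠ 0 :=
    leadingCoeff_ne_zero.1 (by
      rw [h1.2, Finset.prod_const]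
      exact pow_ne_zero _ (mul_ne_zero one_ne_zero ht))
  have hz2 : (∏ a ∈ S' \ K, ((X - C (x a)) * (X - C (q * x a)))) ≠ 0 :=
    leadingCoeff_ne_zero.1 (by rw [h2.2, Finset.prod_const]; simp)
  have hz3 : (∏ b ∈ S', (C (x b) - C q * X) : Polynomial ℂ) ≠ 0 :=
    leadingCoeff_ne_zero.1 (by
      rw [h3.2, Finset.prod_const]
      exact pow_ne_zero _ (neg_ne_zero.2 hq))
  have hcard : (S' \ K).card = S'.card - K.card := Finset.card_sdiff_of_subset hK
  have hle : K.card ≤ S'.card := Finset.card_le_card hK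
  constructor
  · unfold A2P
    rw [natDegree_mul (mul_ne_zero hz1 hz2) hz3, natDegree_mul hz1 hz2, h1.1, h2.1, h3.1, hcard]
    omega
  · unfold A2P
    rw [leadingCoeff_mul, leadingCoeff_mul, h1.2, h2.2, h3.2, Finset.prod_const,
      Finset.prod_const, Finset.prod_const]
    simp [mul_pow]

lemma PP_coeff_top {q t : ℂ} (hq : q ≠ 0) (ht : t ≠ 0) {S' : Finset ι} (k : ℕ) :
    (PP q t x S' (k+1)).coeff (3 * S'.card)
      = (-q) ^ S'.card * (t ^ (S'.card - k) * ek q t x S' k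
          + t ^ (k+1) * ek q t x S' (k+1)) := by
  unfold PP ek
  simp only [Nat.add_sub_cancel]
  rw [coeff_add, finset_sum_coeff, finset_sum_coeff]
  have e1 : ∀ K ∈ S'.powersetCard k, (C (Phi q t x S' K) * A1P q t x S' K).coeff (3*S'.card)
      = Phi q t x S' K * (t ^ (S'.card - k) * (-q) ^ S'.card) := by
    intro K hK
    obtain ⟨hKs, hKc⟩ := Finset.mem_powersetCard.1 hK
    have hd := A1P_deg x hq ht hKs
    rw [coeff_C_mul, ← hd.1, coeff_natDegree, hd.2, hKc]
  have e2 : ∀ K ∈ S'.powersetCard (k+1), (C (Phi q t x S' K) * A2P q t x S' K).coeff (3*S'.card)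
      = Phi q t x S' K * (t ^ (k+1) * (-q) ^ S'.card) := by
    intro K hK
    obtain ⟨hKs, hKc⟩ := Finset.mem_powersetCard.1 hK
    have hd := A2P_deg x hq ht hKs
    rw [coeff_C_mul, ← hd.1, coeff_natDegree, hd.2, hKc]
  rw [Finset.sum_congr rfl e1, Finset.sum_congr rfl e2, ← Finset.sum_mul, ← Finset.sum_mul]
  ring

lemma ndCX (a : ℂ) : (C a * X : Polynomial ℂ).natDegree ≤ 1 :=
  (natDegree_C_mul_le a X).trans natDegree_X_le
lemma ndC (a : ℂ) : (C a : Polynomial ℂ).natDegree ≤ 1 := by simp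
lemma ndCC (a b : ℂ) : (C a * C b : Polynomial ℂ).natDegree ≤ 1 := by
  rw [← C_mul]
  exact (natDegree_C _).le.trans (by omega)
lemma ndXX : (X : Polynomial ℂ).natDegree ≤ 1 := natDegree_X_le

lemma nd_lin_le {p r : Polynomial ℂ} (hp : p.natDegree ≤ 1) (hr : r.natDegree ≤ 1) :
    (p - r).natDegree ≤ 1 := (natDegree_sub_le _ _).trans (max_le hp hr)

lemma PP_natDegree_le {q t : ℂ} {S' : Finset ι} (k : ℕ) :
    (PP q t x S' k).natDegree ≤ 3 * S'.card := by
  have hA1 : ∀ K ⊆ S', (A1P q t x S' K).natDegree ≤ 3 * S'.card := by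
    intro K hK
    unfold A1P
    refine (natDegree_mul_le).trans ?_
    have b1 : (∏ b ∈ S' \ K, ((C t * X - C (x b)) * (C (t * x b) - C q * X))).natDegree
        ≤ 2 * (S' \ K).card := by
      refine (natDegree_prod_le _ _).trans ?_
      refine (Finset.sum_le_card_nsmul _ _ 2 fun b _ => ?_).trans (by simp [mul_comm])
      refine natDegree_mul_le.trans ?_
      have := natDegree_linear_le (a := t) (b := -(x b))
      have h1 : (C t * X - C (x b)).natDegree ≤ 1 := by
        exact nd_lin_le (by first | exact ndCX _ | exact ndC _ | exact ndCC _ _ | exact ndXX)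
          (by first | exact ndCX _ | exact ndC _ | exact ndCC _ _ | exact ndXX)
      have h2 : (C (t * x b) - C q * X).natDegree ≤ 1 := by
        exact nd_lin_le (by first | exact ndCX _ | exact ndC _ | exact ndCC _ _ | exact ndXX)
          (by first | exact ndCX _ | exact ndC _ | exact ndCC _ _ | exact ndXX)
      omega
    have b2 : (∏ b ∈ K, ((X - C (x b)) * (C (x b) - C q * X))).natDegree ≤ 2 * K.card := by
      refine (natDegree_prod_le _ _).trans ?_
      refine (Finset.sum_le_card_nsmul _ _ 2 fun b _ => ?_).trans (by simp [mul_comm])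
      refine natDegree_mul_le.trans ?_
      have h1 : (X - C (x b) : Polynomial ℂ).natDegree ≤ 1 := by
        exact nd_lin_le (by first | exact ndCX _ | exact ndC _ | exact ndCC _ _ | exact ndXX)
          (by first | exact ndCX _ | exact ndC _ | exact ndCC _ _ | exact ndXX)
      have h2 : (C (x b) - C q * X).natDegree ≤ 1 := by
        exact nd_lin_le (by first | exact ndCX _ | exact ndC _ | exact ndCC _ _ | exact ndXX)
          (by first | exact ndCX _ | exact ndC _ | exact ndCC _ _ | exact ndXX)
      omega
    have b3 : (∏ b ∈ S', (X - C (q * x b)) : Polynomial ℂ).natDegree ≤ S'.card := by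
      refine (natDegree_prod_le _ _).trans ?_
      refine (Finset.sum_le_card_nsmul _ _ 1 fun b _ => ?_).trans (by simp [mul_comm])
      exact nd_lin_le (by first | exact ndCX _ | exact ndC _ | exact ndCC _ _ | exact ndXX)
          (by first | exact ndCX _ | exact ndC _ | exact ndCC _ _ | exact ndXX)
    have hcard : (S' \ K).card = S'.card - K.card := Finset.card_sdiff_of_subset hK
    have hle : K.card ≤ S'.card := Finset.card_le_card hK
    have := natDegree_mul_le (p := ∏ b ∈ S' \ K, ((C t * X - C (x b)) * (C (t * x b) - C q * X)))
      (q := ∏ b ∈ K, ((X - C (x b)) * (C (x b) - C q * X)))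
    omega
  have hA2 : ∀ K ⊆ S', (A2P q t x S' K).natDegree ≤ 3 * S'.card := by
    intro K hK
    unfold A2P
    refine (natDegree_mul_le).trans ?_
    have b1 : (∏ a ∈ K, ((X - C (t * x a)) * (C t * X - C (q * x a)))).natDegree
        ≤ 2 * K.card := by
      refine (natDegree_prod_le _ _).trans ?_
      refine (Finset.sum_le_card_nsmul _ _ 2 fun b _ => ?_).trans (by simp [mul_comm])
      refine natDegree_mul_le.trans ?_
      have h1 : (X - C (t * x b) : Polynomial ℂ).natDegree ≤ 1 := by
        exact nd_lin_le (by first | exact ndCX _ | exact ndC _ | exact ndCC _ _ | exact ndXX)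
          (by first | exact ndCX _ | exact ndC _ | exact ndCC _ _ | exact ndXX)
      have h2 : (C t * X - C (q * x b)).natDegree ≤ 1 := by
        exact nd_lin_le (by first | exact ndCX _ | exact ndC _ | exact ndCC _ _ | exact ndXX)
          (by first | exact ndCX _ | exact ndC _ | exact ndCC _ _ | exact ndXX)
      omega
    have b2 : (∏ a ∈ S' \ K, ((X - C (x a)) * (X - C (q * x a)))).natDegree
        ≤ 2 * (S' \ K).card := by
      refine (natDegree_prod_le _ _).trans ?_
      refine (Finset.sum_le_card_nsmul _ _ 2 fun b _ => ?_).trans (by simp [mul_comm])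
      refine natDegree_mul_le.trans ?_
      have h1 : (X - C (x b) : Polynomial ℂ).natDegree ≤ 1 := by
        exact nd_lin_le (by first | exact ndCX _ | exact ndC _ | exact ndCC _ _ | exact ndXX)
          (by first | exact ndCX _ | exact ndC _ | exact ndCC _ _ | exact ndXX)
      have h2 : (X - C (q * x b) : Polynomial ℂ).natDegree ≤ 1 := by
        exact nd_lin_le (by first | exact ndCX _ | exact ndC _ | exact ndCC _ _ | exact ndXX)
          (by first | exact ndCX _ | exact ndC _ | exact ndCC _ _ | exact ndXX)
      omega
    have b3 : (∏ b ∈ S', (C (x b) - C q * X)).natDegree ≤ S'.card := by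
      refine (natDegree_prod_le _ _).trans ?_
      refine (Finset.sum_le_card_nsmul _ _ 1 fun b _ => ?_).trans (by simp [mul_comm])
      exact nd_lin_le (by first | exact ndCX _ | exact ndC _ | exact ndCC _ _ | exact ndXX)
          (by first | exact ndCX _ | exact ndC _ | exact ndCC _ _ | exact ndXX)
    have hcard : (S' \ K).card = S'.card - K.card := Finset.card_sdiff_of_subset hK
    have hle : K.card ≤ S'.card := Finset.card_le_card hK
    have := natDegree_mul_le (p := ∏ a ∈ K, ((X - C (t * x a)) * (C t * X - C (q * x a))))
      (q := ∏ a ∈ S' \ K, ((X - C (x a)) * (X - C (q * x a))))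
    omega
  unfold PP
  refine (natDegree_add_le _ _).trans ?_
  refine max_le ?_ ?_ <;>
  · refine natDegree_sum_le_of_forall_le _ _ fun K hK => ?_
    refine (natDegree_mul_le).trans ?_
    have h := Finset.mem_powersetCard.1 hK
    first
    | (have := hA1 K h.1; simp only [natDegree_C]; omega)
    | (have := hA2 K h.1; simp only [natDegree_C]; omega)

lemma ek_zero (S : Finset ι) : ek q t x S 0 = 1 := by
  unfold ek
  rw [Finset.powersetCard_zero, Finset.sum_singleton]
  simp [Phi]

lemma ek_card (S : Finset ι) : ek q t x S S.card = 1 := by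
  unfold ek
  rw [Finset.powersetCard_self, Finset.sum_singleton]
  simp [Phi]

theorem ek_symm {q t : ℂ} (hq0 : q ≠ 0) (hq1 : q ≠ 1) (hqn1 : q ≠ -1) (ht : t ≠ 0)
    (x : ι → ℂ) :
    ∀ n : ℕ, ∀ S : Finset ι, S.card ≤ n → (∀ a ∈ S, x a ≠ 0) →
      (∀ a ∈ S, ∀ b ∈ S, a ≠ b → x a ≠ x b ∧ x a ≠ q * x b ∧ x a ≠ q^2 * x b) →
      ∀ k, k ≤ S.card → ek q t x S k = ek q t x S (S.card - k) := by
  intro n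
  induction n with
  | zero =>
    intro S hcard h0 hgen k hk
    have hS : S = ∅ := Finset.card_eq_zero.1 (Nat.le_zero.1 hcard)
    subst hS
    simp only [Finset.card_empty, Nat.le_zero] at hk
    subst hk
    rfl
  | succ n IH =>
    intro S hcard h0 hgen k hk
    by_cases hcn : S.card ≤ n
    · exact IH S hcn h0 hgen k hk
    have hcard' : S.card = n + 1 := le_antisymm hcard (not_le.1 hcn)
    rcases Nat.eq_zero_or_pos k with rfl | hk1
    · rw [ek_zero, Nat.sub_zero, ek_card]
    rcases eq_or_lt_of_le hk with rfl | hklt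
    · rw [ek_card, Nat.sub_self, ek_zero]
    -- now 1 ≤ k ≤ S.card - 1
    have hSne : S.Nonempty := Finset.card_pos.1 (by omega)
    obtain ⟨r, hr⟩ := hSne
    set S' := S.erase r with hS'
    have hrS' : r ∉ S' := Finset.notMem_erase r S
    have hins : insert r S' = S := Finset.insert_erase hr
    have hm : S'.card = n := by
      rw [hS', Finset.card_erase_of_mem hr, hcard']
      omega
    set m := S'.card with hmdef
    obtain ⟨j, rfl⟩ : ∃ j, k = j + 1 := ⟨k - 1, by omega⟩
    have hjm : j + 1 ≤ m := by omega
    have hS'sub : S' ⊆ S := Finset.erase_subset r S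
    have h0' : ∀ a ∈ S', x a ≠ 0 := fun a ha => h0 a (hS'sub ha)
    have hgen' : ∀ a ∈ S', ∀ b ∈ S', a ≠ b →
        x a ≠ x b ∧ x a ≠ q * x b ∧ x a ≠ q^2 * x b :=
      fun a ha b hb hab => hgen a (hS'sub ha) b (hS'sub hb) hab
    have hgen'2 : ∀ a ∈ S', ∀ b ∈ S', a ≠ b → x a ≠ x b ∧ x a ≠ q * x b :=
      fun a ha b hb hab => ⟨(hgen' a ha b hb hab).1, (hgen' a ha b hb hab).2.1⟩
    -- the two polynomials agree
    have hPP : PP q t x S' (j+1) = PP q t x S' ((m - 1 - j) + 1) := by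
      set D := PP q t x S' (j+1) - PP q t x S' ((m - 1 - j) + 1) with hD
      by_cases hD0 : D = 0
      · have := sub_eq_zero.1 hD0
        exact this
      exfalso
      -- coefficient at top vanishes by IH on S'
      have hIH1 : ∀ i ≤ m, ek q t x S' i = ek q t x S' (m - i) :=
        fun i hi => IH S' (by omega) h0' hgen' i hi
      have hcoeff : D.coeff (3 * m) = 0 := by
        rw [hD, coeff_sub, PP_coeff_top x hq0 ht, PP_coeff_top x hq0 ht]
        rw [hIH1 j (by omega), hIH1 (j+1) (by omega)]
        have e1 : m - 1 - j + 1 = m - j := by omega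
        have e2 : m - (m - 1 - j) = j + 1 := by omega
        have e3 : m - (j + 1) = m - 1 - j := by omega
        rw [e1, e2, e3]
        ring
      have hdegle : D.natDegree ≤ 3 * m :=
        (natDegree_sub_le _ _).trans (max_le (PP_natDegree_le x _) (PP_natDegree_le x _))
      have hdeg : D.natDegree < 3 * m := by
        rcases lt_or_eq_of_le hdegle with h | h
        · exact h
        · exfalso
          apply hD0
          have := coeff_natDegree (p := D)
          rw [h] at this
          rw [hcoeff] at this
          exact leadingCoeff_eq_zero.1 this.symm
      -- evaluation points
      set E : Finset ℂ := (S'.image x ∪ S'.image (fun b => q * x b)) ∪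
        S'.image (fun b => x b / q) with hE
      have hinj1 : Set.InjOn x S' := by
        intro a ha b hb hab
        by_contra hne
        exact ((hgen' a ha b hb hne).1) hab
      have hinj2 : Set.InjOn (fun b => q * x b) S' := by
        intro a ha b hb hab
        by_contra hne
        exact ((hgen' a ha b hb hne).1) (mul_left_cancel₀ hq0 hab)
      have hinj3 : Set.InjOn (fun b => x b / q) S' := by
        intro a ha b hb hab
        simp only at hab
        by_contra hne
        apply (hgen' a ha b hb hne).1
        field_simp at hab
        exact hab
      have hd12 : Disjoint (S'.image x) (S'.image (fun b => q * x b)) := by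
        rw [Finset.disjoint_left]
        rintro y hy1 hy2
        obtain ⟨a, ha, rfl⟩ := Finset.mem_image.1 hy1
        obtain ⟨b, hb, hba⟩ := Finset.mem_image.1 hy2
        by_cases hab : a = b
        · subst hab
          have : (1 - q) * x a = 0 := by linear_combination - hba
          rcases mul_eq_zero.1 this with h | h
          · exact hq1 (show q = 1 by linear_combination -h)
          · exact h0' a ha h
        · exact (hgen' a ha b hb hab).2.1 hba.symm
      have hd13 : Disjoint (S'.image x) (S'.image (fun b => x b / q)) := by
        rw [Finset.disjoint_left]
        rintro y hy1 hy2
        obtain ⟨a, ha, rfl⟩ := Finset.mem_image.1 hy1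
        obtain ⟨b, hb, hba⟩ := Finset.mem_image.1 hy2
        have hba' : x b = q * x a := by
          field_simp at hba
          linear_combination hba
        by_cases hab : a = b
        · subst hab
          have : (1 - q) * x a = 0 := by linear_combination hba'
          rcases mul_eq_zero.1 this with h | h
          · exact hq1 (show q = 1 by linear_combination -h)
          · exact h0' a ha h
        · exact (hgen' b hb a ha (Ne.symm hab)).2.1 hba'
      have hd23 : Disjoint (S'.image (fun b => q * x b)) (S'.image (fun b => x b / q)) := by
        rw [Finset.disjoint_left]
        rintro y hy1 hy2
        obtain ⟨a, ha, hay⟩ := Finset.mem_image.1 hy1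
        obtain ⟨b, hb, hby⟩ := Finset.mem_image.1 hy2
        have hba' : x b = q^2 * x a := by
          have : q * x a = x b / q := by rw [hay, hby]
          field_simp at this
          linear_combination - this
        by_cases hab : a = b
        · subst hab
          have : (1 - q^2) * x a = 0 := by linear_combination hba'
          rcases mul_eq_zero.1 this with h | h
          · have : (1 - q) * (1 + q) = 0 := by linear_combination h
            rcases mul_eq_zero.1 this with h' | h'
            · exact hq1 (show q = 1 by linear_combination -h')
            · exact hqn1 (show q = -1 by linear_combination h')
          · exact h0' a ha h
        · exact (hgen' b hb a ha (Ne.symm hab)).2.2 hba'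
      have hcardE : #E = 3 * m := by
        rw [hE, Finset.card_union_of_disjoint, Finset.card_union_of_disjoint hd12,
          Finset.card_image_of_injOn hinj1, Finset.card_image_of_injOn hinj2,
          Finset.card_image_of_injOn hinj3]
        · ring
        · rw [Finset.disjoint_union_left]
          exact ⟨hd13, hd23⟩
      have heval : ∀ y ∈ E, D.eval y = 0 := by
        intro y hy
        have hIH2 : ∀ c ∈ S', ek q t x (S'.erase c) j = ek q t x (S'.erase c) (m - 1 - j) := by
          intro c hc
          have hsub : S'.erase c ⊆ S' := Finset.erase_subset c S'
          have hcard'' : (S'.erase c).card = m - 1 := by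
            rw [Finset.card_erase_of_mem hc]
          have := IH (S'.erase c) (by omega)
            (fun a ha => h0' a (hsub ha))
            (fun a ha b hb hab => hgen' a (hsub ha) b (hsub hb) hab) j (by omega)
          rwa [hcard''] at this
        rw [hE] at hy
        simp only [Finset.mem_union, Finset.mem_image] at hy
        rw [hD, eval_sub]
        rcases hy with (⟨c, hc, rfl⟩ | ⟨c, hc, rfl⟩) | ⟨c, hc, rfl⟩
        · rw [PP_eval_xc q t x hc _ hgen'2, PP_eval_xc q t x hc _ hgen'2, sub_self]
        · rw [PP_eval_qxc q t x hc _ hgen'2, PP_eval_qxc q t x hc _ hgen'2, hIH2 c hc,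
            sub_self]
        · have hyq : q * (x c / q) = x c := by
            rw [mul_comm, div_mul_cancel₀ _ hq0]
          rw [PP_eval_y q t x hc hyq hq0 _ hgen'2, PP_eval_y q t x hc hyq hq0 _ hgen'2,
            hIH2 c hc, sub_self]
      exact hD0 (eq_zero_of_natDegree_lt_card_of_eval_eq_zero' D E heval (by omega))
    -- main evaluation identity
    have hden : ∀ b ∈ S', x r ≠ x b ∧ x b ≠ q * x r ∧ x r ≠ q * x b := by
      intro b hb
      have hbS : b ∈ S := hS'sub hb
      have hrb : r ≠ b := fun h => hrS' (h ▸ hb)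
      exact ⟨(hgen r hr b hbS hrb).1, (hgen b hbS r hr (Ne.symm hrb)).2.1,
        (hgen r hr b hbS hrb).2.1⟩
    have e1 := ek_mul_QP q t x hrS' j hden
    have e2 := ek_mul_QP q t x hrS' (m - 1 - j) hden
    rw [hins] at e1 e2
    have hQv : (QP q x S').eval (x r) ≠ 0 := by
      rw [QP_eval]
      rw [Finset.prod_ne_zero_iff]
      intro b hb
      obtain ⟨d1, d2, d3⟩ := hden b hb
      exact mul_ne_zero (mul_ne_zero (sub_ne_zero.2 d1) (sub_ne_zero.2 d2)) (sub_ne_zero.2 d3)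
    have hfin : S.card - (j+1) = (m - 1 - j) + 1 := by omega
    rw [hfin]
    apply mul_right_cancel₀ hQv
    rw [e1, e2, hPP]

theorem ek_symm_weak {q : ℝ} (hq0r : 0 < q) (hq1r : q < 1) {t : ℂ} (ht : t ≠ 0)
    (x : ι → ℂ) (S : Finset ι)
    (hgen : ∀ a ∈ S, ∀ b ∈ S, a ≠ b → x a ≠ x b ∧ x a ≠ (q : ℂ) * x b)
    (k : ℕ) (hk : k ≤ S.card) :
    ek (q : ℂ) t x S k = ek (q : ℂ) t x S (S.card - k) := by
  classical
  set qc : ℂ := (q : ℂ) with hqc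
  have hqc0 : qc ≠ 0 := by
    simp only [hqc, ne_eq, Complex.ofReal_eq_zero]
    exact ne_of_gt hq0r
  have hqc1 : qc ≠ 1 := by
    simp only [hqc, ne_eq]
    intro h
    rw [show (1 : ℂ) = ((1 : ℝ) : ℂ) by norm_num, Complex.ofReal_inj] at h
    exact absurd h (ne_of_lt hq1r)
  have hqcn1 : qc ≠ -1 := by
    simp only [hqc, ne_eq]
    intro h
    rw [show (-1 : ℂ) = ((-1 : ℝ) : ℂ) by norm_num, Complex.ofReal_inj] at h
    linarith [h ▸ hq0r]
  have h1q : (1 : ℂ) - qc ≠ 0 := fun h => hqc1 (by linear_combination -h)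
  have h1q2 : (1 : ℂ) - qc^2 ≠ 0 := by
    intro h
    have : (1 - qc) * (1 + qc) = 0 := by linear_combination h
    rcases mul_eq_zero.1 this with h' | h'
    · exact h1q h'
    · exact hqcn1 (by linear_combination h')
  set Bad : Finset ℂ := S.image (fun a => -x a) ∪
    (S ×ˢ S).image (fun p => (qc * x p.2 - x p.1) / (1 - qc)) ∪
    (S ×ˢ S).image (fun p => (qc^2 * x p.2 - x p.1) / (1 - qc^2)) with hBad
  -- for ε outside Bad, the strong genericity holds for the shifted configuration
  have key : ∀ ε : ℂ, ε ∉ Bad →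
      ek qc t (fun a => x a + ε) S k = ek qc t (fun a => x a + ε) S (S.card - k) := by
    intro ε hε
    simp only [hBad, Finset.mem_union, not_or, Finset.mem_image, Finset.mem_product] at hε
    obtain ⟨⟨hε0, hε1⟩, hε2⟩ := hε
    have h0ε : ∀ a ∈ S, x a + ε ≠ 0 := by
      intro a ha h
      exact hε0 ⟨a, ha, by linear_combination -h⟩
    have hgenε : ∀ a ∈ S, ∀ b ∈ S, a ≠ b → (x a + ε) ≠ (x b + ε) ∧
        (x a + ε) ≠ qc * (x b + ε) ∧ (x a + ε) ≠ qc^2 * (x b + ε) := by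
      intro a ha b hb hab
      refine ⟨fun h => (hgen a ha b hb hab).1 (by linear_combination h), ?_, ?_⟩
      · intro h
        refine hε1 ⟨(a, b), ⟨ha, hb⟩, ?_⟩
        rw [div_eq_iff h1q]
        linear_combination -h
      · intro h
        refine hε2 ⟨(a, b), ⟨ha, hb⟩, ?_⟩
        rw [div_eq_iff h1q2]
        linear_combination -h
    exact ek_symm hqc0 hqc1 hqcn1 ht (fun a => x a + ε) S.card S le_rfl h0ε hgenε k hk
  -- choose a sequence of good ε tending to 0
  obtain ⟨δ, hδpos, hδ⟩ : ∃ δ : ℝ, 0 < δ ∧ ∀ ε : ℂ, ε ≠ 0 → ‖ε‖ < δ → ε ∉ Bad := by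
    by_cases hB : (Bad.filter (fun z => z ≠ 0)).Nonempty
    · refine ⟨((Bad.filter (fun z => z ≠ 0)).image (fun z : ℂ => ‖z‖)).min' (hB.image _), ?_, ?_⟩
      · obtain ⟨z, hz, hze⟩ := Finset.mem_image.1
          (((Bad.filter (fun z => z ≠ 0)).image (fun z : ℂ => ‖z‖)).min'_mem (hB.image _))
        rw [← hze]
        exact norm_pos_iff.2 (Finset.mem_filter.1 hz).2
      · intro ε hε0 hεδ hεB
        have : ‖ε‖ ∈ (Bad.filter (fun z => z ≠ 0)).image (fun z : ℂ => ‖z‖) :=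
          Finset.mem_image.2 ⟨ε, Finset.mem_filter.2 ⟨hεB, hε0⟩, rfl⟩
        exact absurd (Finset.min'_le _ _ this) (not_le.2 hεδ)
    · refine ⟨1, one_pos, fun ε hε0 _ hεB => ?_⟩
      exact hB ⟨ε, Finset.mem_filter.2 ⟨hεB, hε0⟩⟩
  set u : ℕ → ℂ := fun n => ((δ / (n + 2) : ℝ) : ℂ) with hu
  have hupos : ∀ n : ℕ, 0 < δ / ((n : ℝ) + 2) := fun n => div_pos hδpos (by positivity)
  have huB : ∀ n, u n ∉ Bad := by
    intro n
    refine hδ _ ?_ ?_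
    · simp only [hu, ne_eq, Complex.ofReal_eq_zero]
      exact ne_of_gt (hupos n)
    · rw [hu]
      simp only [Complex.norm_real, Real.norm_eq_abs]
      rw [abs_of_pos (hupos n)]
      rw [div_lt_iff₀ (by positivity : (0:ℝ) < (n:ℝ) + 2)]
      nlinarith [hupos n]
  have huT : Filter.Tendsto u Filter.atTop (nhds 0) := by
    rw [hu]
    rw [show (0 : ℂ) = ((0 : ℝ) : ℂ) by norm_num]
    refine (Complex.continuous_ofReal.tendsto _).comp ?_
    exact Filter.Tendsto.div_atTop tendsto_const_nhds
      (Filter.tendsto_atTop_add_const_right _ 2 tendsto_natCast_atTop_atTop)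
  -- continuity of ek in the shift parameter
  have hcont : ∀ j : ℕ, Filter.Tendsto (fun ε : ℂ => ek qc t (fun a => x a + ε) S j)
      (nhds 0) (nhds (ek qc t x S j)) := by
    intro j
    have : ek qc t x S j = ek qc t (fun a => x a + 0) S j := by simp
    rw [this]
    unfold ek Phi
    refine tendsto_finset_sum _ fun K hK => ?_
    refine tendsto_finset_prod _ fun a ha => ?_
    refine tendsto_finset_prod _ fun b hb => ?_
    obtain ⟨hKs, _⟩ := Finset.mem_powersetCard.1 hK
    have haS : a ∈ S := hKs ha
    have hbS : b ∈ S := (Finset.mem_sdiff.1 hb).1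
    have hab : a ≠ b := fun h => (Finset.mem_sdiff.1 hb).2 (h ▸ ha)
    unfold ph
    have hd : ((x a + 0) - (x b + 0)) * ((x b + 0) - qc * (x a + 0)) ≠ 0 := by
      simp only [add_zero]
      exact mul_ne_zero (sub_ne_zero.2 (hgen a haS b hbS hab).1)
        (sub_ne_zero.2 (hgen b hbS a haS (Ne.symm hab)).2)
    exact Filter.Tendsto.div
      (Continuous.tendsto' (by fun_prop) _ _ rfl)
      (Continuous.tendsto' (by fun_prop) _ _ rfl) hd
  have hseq : Filter.Tendsto
      (fun n => ek qc t (fun a => x a + u n) S k - ek qc t (fun a => x a + u n) S (S.card - k))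
      Filter.atTop (nhds (ek qc t x S k - ek qc t x S (S.card - k))) :=
    ((hcont k).sub (hcont (S.card - k))).comp huT
  have hzero : (fun n => ek qc t (fun a => x a + u n) S k
      - ek qc t (fun a => x a + u n) S (S.card - k)) = fun _ => 0 := by
    funext n
    rw [key (u n) (huB n), sub_self]
  rw [hzero] at hseq
  have := tendsto_nhds_unique hseq tendsto_const_nhds
  linear_combination this

section PartA

variable [Fintype ι]

def Ac (tc : ℂ) (z : ι → ℂ) (I : Finset ι) : ℂ :=
  ∏ i ∈ I, ∏ j ∈ Iᶜ, (tc * z i - z j) / (z i - z j)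

def upd (qc : ℂ) (z : ι → ℂ) (I : Finset ι) : ι → ℂ :=
  fun i => if i ∈ I then qc * z i else z i

def CCf (qc tc : ℂ) (z : ι → ℂ) (D U : Finset ι) : ℂ :=
  (∏ a ∈ U, ∏ b ∈ (D ∪ U)ᶜ, (tc * z a - z b) / (z a - z b)) *
  (∏ a ∈ D, ∏ b ∈ (D ∪ U)ᶜ,
    ((tc * z a - z b) / (z a - z b)) * ((tc * (qc * z a) - z b) / (qc * z a - z b))) *
  (∏ a ∈ D, ∏ b ∈ U, (tc * z a - z b) / (z a - z b))

lemma W_factor (qc tc : ℂ) (z : ι → ℂ) (hq0 : qc ≠ 0) {D U K : Finset ι}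
    (hDU : Disjoint D U) (hK : K ⊆ U) :
    Ac tc z (D ∪ K) * Ac tc (upd qc z (D ∪ K)) (D ∪ (U \ K))
      = CCf qc tc z D U * Phi qc tc z U K := by
  have hDK : Disjoint D K := hDU.mono_right hK
  have hDUK : Disjoint D (U \ K) := hDU.mono_right (Finset.sdiff_subset)
  have hUKR : Disjoint (U \ K) ((D ∪ U)ᶜ) := by
    rw [Finset.disjoint_left]
    intro i hi hic
    exact (Finset.mem_compl.1 hic) (Finset.mem_union_right D (Finset.mem_sdiff.1 hi).1)
  have hKR : Disjoint K ((D ∪ U)ᶜ) := by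
    rw [Finset.disjoint_left]
    intro i hi hic
    exact (Finset.mem_compl.1 hic) (Finset.mem_union_right D (hK hi))
  have hIc : (D ∪ K)ᶜ = (U \ K) ∪ (D ∪ U)ᶜ := by
    ext i
    have h1 : i ∈ K → i ∈ U := fun h => hK h
    have h2 : i ∈ D → i ∉ U := fun hD hU => (Finset.disjoint_left.1 hDU) hD hU
    simp only [Finset.mem_compl, Finset.mem_union, Finset.mem_sdiff, not_or]
    tauto
  have hJc : (D ∪ (U \ K))ᶜ = K ∪ (D ∪ U)ᶜ := by
    ext i
    have h1 : i ∈ K → i ∈ U := fun h => hK h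
    have h2 : i ∈ D → i ∉ U := fun hD hU => (Finset.disjoint_left.1 hDU) hD hU
    simp only [Finset.mem_compl, Finset.mem_union, Finset.mem_sdiff, not_or, not_and, not_not]
    tauto
  -- evaluate upd on the pieces
  have hupdD : ∀ i ∈ D, upd qc z (D ∪ K) i = qc * z i :=
    fun i hi => if_pos (Finset.mem_union_left K hi)
  have hupdK : ∀ i ∈ K, upd qc z (D ∪ K) i = qc * z i :=
    fun i hi => if_pos (Finset.mem_union_right D hi)
  have hupdUK : ∀ i ∈ U \ K, upd qc z (D ∪ K) i = z i := by
    intro i hi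
    refine if_neg fun h => ?_
    rcases Finset.mem_union.1 h with h' | h'
    · exact (Finset.disjoint_left.1 hDU) h' (Finset.mem_sdiff.1 hi).1
    · exact (Finset.mem_sdiff.1 hi).2 h'
  have hupdR : ∀ i ∈ (D ∪ U)ᶜ, upd qc z (D ∪ K) i = z i := by
    intro i hi
    refine if_neg fun h => ?_
    rcases Finset.mem_union.1 h with h' | h'
    · exact (Finset.mem_compl.1 hi) (Finset.mem_union_left U h')
    · exact (Finset.mem_compl.1 hi) (Finset.mem_union_right D (hK h'))
  unfold Ac
  rw [hIc, hJc, Finset.prod_union hDK, Finset.prod_union hDUK]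
  simp only [Finset.prod_union hUKR, Finset.prod_union hKR]
  rw [Finset.prod_mul_distrib, Finset.prod_mul_distrib, Finset.prod_mul_distrib,
    Finset.prod_mul_distrib]
  -- convert the scaled blocks
  have rat1 : ∀ a b : ℂ, (tc * (qc * a) - qc * b) / (qc * a - qc * b) = (tc * a - b) / (a - b) := by
    intro a b
    rw [show tc * (qc * a) - qc * b = qc * (tc * a - b) from by ring,
      show qc * a - qc * b = qc * (a - b) from by ring, mul_div_mul_left _ _ hq0]
  have cDK : (∏ i ∈ D, ∏ j ∈ K,
      (tc * upd qc z (D ∪ K) i - upd qc z (D ∪ K) j) / (upd qc z (D ∪ K) i - upd qc z (D ∪ K) j))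
      = ∏ i ∈ D, ∏ j ∈ K, (tc * z i - z j) / (z i - z j) := by
    refine Finset.prod_congr rfl fun i hi => Finset.prod_congr rfl fun j hj => ?_
    rw [hupdD i hi, hupdK j hj, rat1]
  have cDR : (∏ i ∈ D, ∏ j ∈ (D ∪ U)ᶜ,
      (tc * upd qc z (D ∪ K) i - upd qc z (D ∪ K) j) / (upd qc z (D ∪ K) i - upd qc z (D ∪ K) j))
      = ∏ i ∈ D, ∏ j ∈ (D ∪ U)ᶜ, (tc * (qc * z i) - z j) / (qc * z i - z j) := by
    refine Finset.prod_congr rfl fun i hi => Finset.prod_congr rfl fun j hj => ?_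
    rw [hupdD i hi, hupdR j hj]
  have cUKK : (∏ i ∈ U \ K, ∏ j ∈ K,
      (tc * upd qc z (D ∪ K) i - upd qc z (D ∪ K) j) / (upd qc z (D ∪ K) i - upd qc z (D ∪ K) j))
      = ∏ i ∈ U \ K, ∏ j ∈ K, (tc * z i - qc * z j) / (z i - qc * z j) := by
    refine Finset.prod_congr rfl fun i hi => Finset.prod_congr rfl fun j hj => ?_
    rw [hupdUK i hi, hupdK j hj]
  have cUKR : (∏ i ∈ U \ K, ∏ j ∈ (D ∪ U)ᶜ,
      (tc * upd qc z (D ∪ K) i - upd qc z (D ∪ K) j) / (upd qc z (D ∪ K) i - upd qc z (D ∪ K) j))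
      = ∏ i ∈ U \ K, ∏ j ∈ (D ∪ U)ᶜ, (tc * z i - z j) / (z i - z j) := by
    refine Finset.prod_congr rfl fun i hi => Finset.prod_congr rfl fun j hj => ?_
    rw [hupdUK i hi, hupdR j hj]
  rw [cDK, cDR, cUKK, cUKR]
  -- decompose Phi and CC into matching blocks
  have hphi : Phi qc tc z U K =
      (∏ a ∈ K, ∏ b ∈ U \ K, (tc * z a - z b) / (z a - z b)) *
      (∏ a ∈ K, ∏ b ∈ U \ K, (tc * z b - qc * z a) / (z b - qc * z a)) := by
    unfold Phi ph
    rw [← Finset.prod_mul_distrib]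
    refine Finset.prod_congr rfl fun a ha => ?_
    rw [← Finset.prod_mul_distrib]
    refine Finset.prod_congr rfl fun b hb => ?_
    rw [div_mul_div_comm]
  have hswap : (∏ a ∈ K, ∏ b ∈ U \ K, (tc * z b - qc * z a) / (z b - qc * z a))
      = ∏ i ∈ U \ K, ∏ j ∈ K, (tc * z i - qc * z j) / (z i - qc * z j) :=
    Finset.prod_comm
  have c1 : (∏ a ∈ U, ∏ b ∈ (D ∪ U)ᶜ, (tc * z a - z b) / (z a - z b))
      = (∏ a ∈ U \ K, ∏ b ∈ (D ∪ U)ᶜ, (tc * z a - z b) / (z a - z b)) *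
        ∏ a ∈ K, ∏ b ∈ (D ∪ U)ᶜ, (tc * z a - z b) / (z a - z b) :=
    (Finset.prod_sdiff hK).symm
  have c2 : (∏ a ∈ D, ∏ b ∈ (D ∪ U)ᶜ,
      ((tc * z a - z b) / (z a - z b)) * ((tc * (qc * z a) - z b) / (qc * z a - z b)))
      = (∏ a ∈ D, ∏ b ∈ (D ∪ U)ᶜ, (tc * z a - z b) / (z a - z b)) *
        ∏ a ∈ D, ∏ b ∈ (D ∪ U)ᶜ, (tc * (qc * z a) - z b) / (qc * z a - z b) := by
    rw [← Finset.prod_mul_distrib]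
    refine Finset.prod_congr rfl fun a ha => ?_
    rw [← Finset.prod_mul_distrib]
  have c3 : (∏ a ∈ D, ∏ b ∈ U, (tc * z a - z b) / (z a - z b))
      = (∏ a ∈ D, ∏ b ∈ U \ K, (tc * z a - z b) / (z a - z b)) *
        ∏ a ∈ D, ∏ b ∈ K, (tc * z a - z b) / (z a - z b) := by
    rw [← Finset.prod_mul_distrib]
    refine Finset.prod_congr rfl fun a ha => ?_
    exact (Finset.prod_sdiff hK).symm
  rw [CCf, hphi, hswap, c1, c2, c3]
  ring

lemma upd_upd_eq (qc : ℂ) (z : ι → ℂ) {D U K : Finset ι} (hDU : Disjoint D U) (hK : K ⊆ U) :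
    upd qc (upd qc z (D ∪ K)) (D ∪ (U \ K))
      = fun i => if i ∈ D then qc * (qc * z i) else if i ∈ U then qc * z i else z i := by
  funext i
  unfold upd
  by_cases h1 : i ∈ D
  · have hiU : i ∉ U := Finset.disjoint_left.1 hDU h1
    rw [if_pos (Finset.mem_union_left _ h1), if_pos (Finset.mem_union_left _ h1), if_pos h1]
  · by_cases h2 : i ∈ U
    · rw [if_neg h1, if_pos h2]
      by_cases h3 : i ∈ K
      · have : i ∉ D ∪ (U \ K) := by
          simp only [Finset.mem_union, Finset.mem_sdiff, not_or]
          exact ⟨h1, fun h => h.2 h3⟩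
        rw [if_neg this, if_pos (Finset.mem_union_right _ h3)]
      · have hin : i ∈ D ∪ (U \ K) := Finset.mem_union_right _ (Finset.mem_sdiff.2 ⟨h2, h3⟩)
        have hnot : i ∉ D ∪ K := by
          simp only [Finset.mem_union, not_or]
          exact ⟨h1, h3⟩
        rw [if_pos hin, if_neg hnot]
    · have h3 : i ∉ K := fun h => h2 (hK h)
      have hn1 : i ∉ D ∪ (U \ K) := by
        simp only [Finset.mem_union, Finset.mem_sdiff, not_or]
        exact ⟨h1, fun h => h2 h.1⟩
      have hn2 : i ∉ D ∪ K := by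
        simp only [Finset.mem_union, not_or]
        exact ⟨h1, h3⟩
      rw [if_neg h1, if_neg h2, if_neg hn1, if_neg hn2]

lemma fiber_mem_conditions {l m : ℕ} {D U : Finset ι}
    {p : Finset ι × Finset ι}
    (hp : p ∈ ((Finset.univ.powersetCard l ×ˢ Finset.univ.powersetCard m).filter
      (fun p => (p.1 ∩ p.2, p.1 ∆ p.2) = (D, U)))) :
    Disjoint D U ∧ D.card ≤ l ∧ D.card ≤ m ∧ U.card + 2 * D.card = l + m := by
  obtain ⟨hmem, hfil⟩ := Finset.mem_filter.1 hp
  obtain ⟨h1, h2⟩ := Finset.mem_product.1 hmem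
  obtain ⟨-, hc1⟩ := Finset.mem_powersetCard.1 h1
  obtain ⟨-, hc2⟩ := Finset.mem_powersetCard.1 h2
  rw [Prod.mk.injEq] at hfil
  obtain ⟨hD, hU⟩ := hfil
  subst hD hU
  refine ⟨?_, ?_, ?_, ?_⟩
  · rw [Finset.disjoint_left]
    intro a ha hu
    rw [Finset.mem_symmDiff] at hu
    rw [Finset.mem_inter] at ha
    tauto
  · exact hc1 ▸ Finset.card_le_card (Finset.inter_subset_left)
  · exact hc2 ▸ Finset.card_le_card (Finset.inter_subset_right)
  · have he : p.1 ∆ p.2 = (p.1 ∪ p.2) \ (p.1 ∩ p.2) := symmDiff_eq_sup_sdiff_inf p.1 p.2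
    have h4 : #(p.1 ∆ p.2) + #(p.1 ∩ p.2) = #(p.1 ∪ p.2) := by
      rw [he]
      exact Finset.card_sdiff_add_card_eq_card (Finset.inter_subset_union)
    have h5 := Finset.card_union_add_card_inter p.1 p.2
    omega

lemma fiber_sum {l m : ℕ} {D U : Finset ι} (hDU : Disjoint D U) (hd1 : D.card ≤ l)
    (hd2 : D.card ≤ m) (hrel : U.card + 2 * D.card = l + m) (F : Finset ι × Finset ι → ℂ) :
    ∑ p ∈ ((Finset.univ.powersetCard l ×ˢ Finset.univ.powersetCard m).filter
        (fun p => (p.1 ∩ p.2, p.1 ∆ p.2) = (D, U))), F p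
      = ∑ K ∈ U.powersetCard (l - D.card), F (D ∪ K, D ∪ (U \ K)) := by
  refine Finset.sum_nbij' (fun p => p.1 ∩ U) (fun K => (D ∪ K, D ∪ (U \ K))) ?_ ?_ ?_ ?_ ?_
  · -- maps into powersetCard
    intro p hp
    obtain ⟨hmem, hfil⟩ := Finset.mem_filter.1 hp
    obtain ⟨h1, h2⟩ := Finset.mem_product.1 hmem
    obtain ⟨-, hc1⟩ := Finset.mem_powersetCard.1 h1
    rw [Prod.mk.injEq] at hfil
    obtain ⟨hD, hU⟩ := hfil
    refine Finset.mem_powersetCard.2 ⟨Finset.inter_subset_right, ?_⟩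
    have hIU : p.1 ∩ U = p.1 \ p.2 := by
      rw [← hU]
      ext i
      simp only [Finset.mem_inter, Finset.mem_symmDiff, Finset.mem_sdiff]
      tauto
    have hDI : p.1 ∩ p.2 ⊆ p.1 := Finset.inter_subset_left
    have := Finset.card_sdiff_add_card_inter p.1 p.2
    rw [hIU]
    rw [← hD] at hd1 ⊢
    omega
  · -- reverse map lands in the fiber
    intro K hK
    obtain ⟨hKU, hKc⟩ := Finset.mem_powersetCard.1 hK
    have hDK : Disjoint D K := hDU.mono_right hKU
    have hDUK : Disjoint D (U \ K) := hDU.mono_right (Finset.sdiff_subset)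
    refine Finset.mem_filter.2 ⟨Finset.mem_product.2 ⟨?_, ?_⟩, ?_⟩
    · refine Finset.mem_powersetCard.2 ⟨Finset.subset_univ _, ?_⟩
      rw [Finset.card_union_of_disjoint hDK, hKc]
      omega
    · refine Finset.mem_powersetCard.2 ⟨Finset.subset_univ _, ?_⟩
      rw [Finset.card_union_of_disjoint hDUK, Finset.card_sdiff_of_subset hKU, hKc]
      omega
    · have e1 : (D ∪ K) ∩ (D ∪ (U \ K)) = D := by
        ext i
        simp only [Finset.mem_inter, Finset.mem_union, Finset.mem_sdiff]
        have hK' : i ∈ K → i ∈ U := fun h => hKU h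
        have hD' : i ∈ D → i ∉ U := fun hD hU => Finset.disjoint_left.1 hDU hD hU
        tauto
      have e2 : (D ∪ K) ∆ (D ∪ (U \ K)) = U := by
        ext i
        rw [Finset.mem_symmDiff]
        simp only [Finset.mem_union, Finset.mem_sdiff, not_or, not_and, not_not]
        have hK' : i ∈ K → i ∈ U := fun h => hKU h
        have hD' : i ∈ D → i ∉ U := fun hD hU => Finset.disjoint_left.1 hDU hD hU
        tauto
      rw [Prod.mk.injEq]
      exact ⟨e1, e2⟩
  · -- left inverse
    intro p hp
    obtain ⟨hmem, hfil⟩ := Finset.mem_filter.1 hp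
    rw [Prod.mk.injEq] at hfil
    obtain ⟨hD, hU⟩ := hfil
    have h1 : D ∪ p.1 ∩ U = p.1 := by
      rw [← hD, ← hU]
      ext i
      simp only [Finset.mem_union, Finset.mem_inter, Finset.mem_symmDiff]
      tauto
    have h2 : D ∪ (U \ (p.1 ∩ U)) = p.2 := by
      rw [← hD, ← hU]
      ext i
      simp only [Finset.mem_union, Finset.mem_inter, Finset.mem_symmDiff, Finset.mem_sdiff]
      tauto
    rw [h1, h2]
  · -- right inverse
    intro K hK
    obtain ⟨hKU, -⟩ := Finset.mem_powersetCard.1 hK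
    dsimp only
    ext i
    simp only [Finset.mem_inter, Finset.mem_union]
    have hK' : i ∈ K → i ∈ U := fun h => hKU h
    have hD' : i ∈ D → i ∉ U := fun hD hU => Finset.disjoint_left.1 hDU hD hU
    tauto
  · -- summand transported
    intro p hp
    obtain ⟨hmem, hfil⟩ := Finset.mem_filter.1 hp
    rw [Prod.mk.injEq] at hfil
    obtain ⟨hD, hU⟩ := hfil
    have h1 : D ∪ p.1 ∩ U = p.1 := by
      rw [← hD, ← hU]
      ext i
      simp only [Finset.mem_union, Finset.mem_inter, Finset.mem_symmDiff]
      tauto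
    have h2 : D ∪ (U \ (p.1 ∩ U)) = p.2 := by
      rw [← hD, ← hU]
      ext i
      simp only [Finset.mem_union, Finset.mem_inter, Finset.mem_symmDiff, Finset.mem_sdiff]
      tauto
    rw [h1, h2]

theorem sum_core {q : ℝ} (hq0r : 0 < q) (hq1r : q < 1) {tc : ℂ} (ht : tc ≠ 0) (z : ι → ℂ)
    (hz2 : ∀ a b : ι, a ≠ b → z a ≠ z b ∧ z a ≠ (q : ℂ) * z b)
    (l m : ℕ) (f : (ι → ℂ) → ℂ) :
    ∑ I ∈ Finset.univ.powersetCard l, ∑ J ∈ Finset.univ.powersetCard m,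
      Ac tc z I * Ac tc (upd (q : ℂ) z I) J * f (upd (q : ℂ) (upd (q : ℂ) z I) J)
    = ∑ I ∈ Finset.univ.powersetCard m, ∑ J ∈ Finset.univ.powersetCard l,
      Ac tc z I * Ac tc (upd (q : ℂ) z I) J * f (upd (q : ℂ) (upd (q : ℂ) z I) J) := by
  have hq0 : (q : ℂ) ≠ 0 := by
    simp only [ne_eq, Complex.ofReal_eq_zero]
    exact ne_of_gt hq0r
  rw [← Finset.sum_product', ← Finset.sum_product']
  rw [← Finset.sum_fiberwise_of_maps_to (g := fun p : Finset ι × Finset ι => (p.1 ∩ p.2, p.1 ∆ p.2))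
    (t := Finset.univ) (fun p _ => Finset.mem_univ _)
    (fun p => Ac tc z p.1 * Ac tc (upd (q : ℂ) z p.1) p.2 * f (upd (q : ℂ) (upd (q : ℂ) z p.1) p.2))]
  rw [← Finset.sum_fiberwise_of_maps_to (g := fun p : Finset ι × Finset ι => (p.1 ∩ p.2, p.1 ∆ p.2))
    (t := Finset.univ) (fun p _ => Finset.mem_univ _)
    (fun p => Ac tc z p.1 * Ac tc (upd (q : ℂ) z p.1) p.2 * f (upd (q : ℂ) (upd (q : ℂ) z p.1) p.2))]
  refine Finset.sum_congr rfl fun DU _ => ?_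
  obtain ⟨D, U⟩ := DU
  by_cases hcond : Disjoint D U ∧ D.card ≤ l ∧ D.card ≤ m ∧ U.card + 2 * D.card = l + m
  · obtain ⟨hDU, hd1, hd2, hrel⟩ := hcond
    rw [fiber_sum hDU hd1 hd2 hrel, fiber_sum hDU hd2 hd1 (by omega)]
    have hconv : ∀ j1 : ℕ,
        (∑ K ∈ U.powersetCard j1, (Ac tc z (D ∪ K) * Ac tc (upd (q : ℂ) z (D ∪ K)) (D ∪ (U \ K))
          * f (upd (q : ℂ) (upd (q : ℂ) z (D ∪ K)) (D ∪ (U \ K)))))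
        = (CCf (q : ℂ) tc z D U *
            f (fun i => if i ∈ D then (q : ℂ) * ((q : ℂ) * z i)
                else if i ∈ U then (q : ℂ) * z i else z i)) * ek (q : ℂ) tc z U j1 := by
      intro j1
      unfold ek
      rw [Finset.mul_sum]
      refine Finset.sum_congr rfl fun K hK => ?_
      obtain ⟨hKU, -⟩ := Finset.mem_powersetCard.1 hK
      rw [upd_upd_eq (q : ℂ) z hDU hKU, W_factor (q : ℂ) tc z hq0 hDU hKU]
      ring
    rw [hconv (l - D.card), hconv (m - D.card)]
    have hgenU : ∀ a ∈ U, ∀ b ∈ U, a ≠ b → z a ≠ z b ∧ z a ≠ (q : ℂ) * z b :=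
      fun a _ b _ hab => hz2 a b hab
    have hkle : l - D.card ≤ U.card := by omega
    have hsymm := ek_symm_weak hq0r hq1r ht z U hgenU (l - D.card) hkle
    rw [hsymm]
    have : U.card - (l - D.card) = m - D.card := by omega
    rw [this]
  · rw [Finset.sum_eq_zero, Finset.sum_eq_zero]
    · intro p hp
      have h := fiber_mem_conditions hp
      exact absurd ⟨h.1, h.2.2.1, h.2.1, by omega⟩ hcond
    · intro p hp
      have h := fiber_mem_conditions hp
      exact absurd ⟨h.1, h.2.1, h.2.2.1, h.2.2.2⟩ hcond

end PartA

end MacKey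



/-- The Macdonald q-difference operator `D^m(q,t)` acting on functions `f : ℂ^n → ℂ`:
`(D^m(q,t) f)(z) = t^{m(m+1)/2} Σ_{|I|=m} [∏_{i∈I, j∉I} (t z_i - z_j)/(z_i - z_j)] f(z^{(I)})`,
where `z^{(I)}` is `z` with `z_i` replaced by `q z_i` for `i ∈ I`. -/
noncomputable def macD (n : ℕ) (q t : ℝ) (m : ℕ) (f : (Fin n → ℂ) → ℂ)
    (z : Fin n → ℂ) : ℂ :=
  (t : ℂ) ^ (m * (m + 1) / 2) *
    ∑ I ∈ (Finset.univ : Finset (Fin n)).powersetCard m,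
      (∏ i ∈ I, ∏ j ∈ Iᶜ, ((t : ℂ) * z i - z j) / (z i - z j)) *
        f (fun i => if i ∈ I then (q : ℂ) * z i else z i)

/-- The Macdonald operators commute pointwise at any nondegenerate point. -/
theorem stmt0 (n : ℕ) (hn : 1 ≤ n) (q t : ℝ)
    (hq0 : 0 < q) (hq1 : q < 1) (ht0 : 0 < t) (ht1 : t < 1)
    (l m : ℕ) (hl1 : 1 ≤ l) (hln : l ≤ n) (hm1 : 1 ≤ m) (hmn : m ≤ n)
    (f : (Fin n → ℂ) → ℂ) (z : Fin n → ℂ)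
    (hz : ∀ i j : Fin n, i ≠ j → ∀ a b : ℕ, a ≤ 1 → b ≤ 1 →
      (q : ℂ) ^ a * z i ≠ (q : ℂ) ^ b * z j) :
    macD n q t l (macD n q t m f) z = macD n q t m (macD n q t l f) z := by
  have htc : (t : ℂ) ≠ 0 := by
    simp only [ne_eq, Complex.ofReal_eq_zero]
    exact ne_of_gt ht0
  have hz2 : ∀ a b : Fin n, a ≠ b → z a ≠ z b ∧ z a ≠ (q : ℂ) * z b := by
    intro a b hab
    constructor
    · have := hz a b hab 0 0 (by norm_num) (by norm_num)
      simpa using this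
    · have := hz a b hab 0 1 (by norm_num) (by norm_num)
      simpa using this
  have expand : ∀ (l' m' : ℕ) (g : (Fin n → ℂ) → ℂ),
      macD n q t l' (macD n q t m' g) z
      = ((t : ℂ) ^ (l' * (l' + 1) / 2) * (t : ℂ) ^ (m' * (m' + 1) / 2)) *
        ∑ I ∈ Finset.univ.powersetCard l', ∑ J ∈ Finset.univ.powersetCard m',
          Ac (t : ℂ) z I * Ac (t : ℂ) (upd (q : ℂ) z I) J *
            g (upd (q : ℂ) (upd (q : ℂ) z I) J) := by
    intro l' m' g
    unfold macD Ac upd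
    rw [Finset.mul_sum, Finset.mul_sum]
    refine Finset.sum_congr rfl fun I _ => ?_
    rw [Finset.mul_sum, Finset.mul_sum, Finset.mul_sum, Finset.mul_sum]
    refine Finset.sum_congr rfl fun J _ => ?_
    ring
  rw [expand l m f, expand m l f, sum_core hq0 hq1 htc z hz2 l m f]
  ring
end

section
/- Let n ≥ 2 and let q, t be real with 0 < q < 1 and 0 < t < 1. Suppose f : ℂ^n → ℂ is invariant under simultaneous q-dilation, i.e. f(q z_1, …, q z_n) = f(z_1, …, z_n) for all z ∈ ℂ^n. Then for every z ∈ ℂ^n with pairwise distinct coordinates, (D^{n−1}(q,t) f)(z) = t^{n(n+1)/2} · t^{−1} · Σ_{i=1}^n [∏_{j ≠ i} (t^{−1} z_i − z_j)/(z_i − z_j)] · f(z with z_i replaced by q^{−1} z_i); that is, D^{n−1}(q,t) agrees with t^{n(n+1)/2} D^1(q^{−1}, t^{−1}) on q-dilation-invariant functions. -/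
/-!
The subsets of size `n - 1` are the complements `{i}ᶜ`. Dilating every coordinate except `z i`
by `q` is, up to a simultaneous dilation by `q`, the same as dilating `z i` by `q⁻¹`; and each
cross factor satisfies `(t z_a - z_i)/(z_a - z_i) = t · (t⁻¹ z_i - z_a)/(z_i - z_a)`, so the
`n - 1` extra powers of `t` combine with `t^((n-1)n/2)` into `t^(n(n+1)/2) · t⁻¹`.
-/

open Finset

theorem Finset.powersetCard_card_sub_one_univ {ι : Type*} [Fintype ι] [DecidableEq ι]
    [Nonempty ι] :
    (univ : Finset ι).powersetCard (Fintype.card ι - 1) = univ.image fun i => {i}ᶜ := by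
  ext I
  simp only [mem_powersetCard, subset_univ, true_and, mem_image, mem_univ]
  constructor
  · intro hI
    have hpos := Fintype.card_pos (α := ι)
    obtain ⟨i, hi⟩ := card_eq_one.mp (by rw [card_compl]; omega : Iᶜ.card = 1)
    exact ⟨i, by rw [← hi, compl_compl]⟩
  · rintro ⟨i, rfl⟩
    simp [card_compl]

theorem Finset.sum_powersetCard_card_sub_one_univ {ι M : Type*} [Fintype ι] [DecidableEq ι]
    [Nonempty ι] [AddCommMonoid M] (g : Finset ι → M) :
    ∑ I ∈ (univ : Finset ι).powersetCard (Fintype.card ι - 1), g I = ∑ i, g {i}ᶜ := by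
  rw [powersetCard_card_sub_one_univ, sum_image fun a _ b _ h => by simpa using compl_injective h]

theorem mul_sub_div_sub_eq_mul_inv_mul_sub_div_sub {K : Type*} [Field K] {t : K} (ht : t ≠ 0)
    (x y : K) : (t * x - y) / (x - y) = t * ((t⁻¹ * y - x) / (y - x)) := by
  rw [← neg_div_neg_eq, mul_div_assoc', mul_sub, mul_inv_cancel_left₀ ht]
  ring_nf

theorem prod_erase_mul_sub_div_sub {ι K : Type*} [Fintype ι] [DecidableEq ι] [Field K]
    {t : K} (ht : t ≠ 0) (z : ι → K) (i : ι) :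
    ∏ a ∈ univ.erase i, (t * z a - z i) / (z a - z i) =
      t ^ (Fintype.card ι - 1) * ∏ a ∈ univ.erase i, (t⁻¹ * z i - z a) / (z i - z a) := by
  simp_rw [mul_sub_div_sub_eq_mul_inv_mul_sub_div_sub ht, prod_mul_distrib, prod_const,
    card_erase_of_mem (mem_univ i), card_univ]

theorem apply_ite_mem_compl_singleton_eq_apply_update {ι K β : Type*} [DecidableEq ι]
    [Fintype ι] [Field K]
    {f : (ι → K) → β} {q : K} (hq : q ≠ 0) (hf : ∀ z : ι → K, f (fun i => q * z i) = f z)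
    (z : ι → K) (i : ι) :
    f (fun k => if k ∈ ({i}ᶜ : Finset ι) then q * z k else z k) =
      f (Function.update z i (q⁻¹ * z i)) := by
  rw [← hf (Function.update z i (q⁻¹ * z i))]
  congr 1
  ext k
  rcases eq_or_ne k i with rfl | hk
  · simp [mul_inv_cancel_left₀ hq]
  · simp [hk]

theorem pow_triangle_pred_mul_pow_pred {G : Type*} [GroupWithZero G] {t : G} (ht : t ≠ 0)
    {n : ℕ} (hn : 1 ≤ n) :
    t ^ ((n - 1) * (n - 1 + 1) / 2) * t ^ (n - 1) = t ^ (n * (n + 1) / 2) * t⁻¹ := by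
  obtain ⟨m, rfl⟩ := Nat.exists_eq_add_of_le' hn
  have h : (m + 1) * (m + 1 + 1) / 2 = m * (m + 1) / 2 + m + 1 := by
    rw [show (m + 1) * (m + 1 + 1) = m * (m + 1) + 2 * (m + 1) by ring,
      Nat.add_mul_div_left _ _ two_pos]
    ring
  simp only [Nat.add_sub_cancel]
  rw [h, pow_succ, mul_inv_cancel_right₀ ht, pow_add]

theorem stmt2_general (n : ℕ) (hn : 2 ≤ n) (q t : ℝ)
    (hq0 : 0 < q) (ht0 : 0 < t)
    (f : (Fin n → ℂ) → ℂ)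
    (hf : ∀ z : Fin n → ℂ, f (fun i => (q : ℂ) * z i) = f z)
    (z : Fin n → ℂ) :
    macD n q t (n - 1) f z =
      (t : ℂ) ^ (n * (n + 1) / 2) * (t : ℂ)⁻¹ *
        ∑ i : Fin n,
          (∏ j ∈ Finset.univ.erase i, ((t : ℂ)⁻¹ * z i - z j) / (z i - z j)) *
            f (Function.update z i ((q : ℂ)⁻¹ * z i)) := by
  have hq : (q : ℂ) ≠ 0 := by exact_mod_cast hq0.ne'
  have ht : (t : ℂ) ≠ 0 := by exact_mod_cast ht0.ne'
  have : NeZero n := ⟨by omega⟩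
  have hsum := sum_powersetCard_card_sub_one_univ (ι := Fin n) (M := ℂ)
  rw [Fintype.card_fin] at hsum
  rw [macD, hsum]
  simp_rw [compl_compl, prod_singleton, apply_ite_mem_compl_singleton_eq_apply_update hq hf,
    compl_singleton, prod_erase_mul_sub_div_sub ht, Fintype.card_fin, mul_assoc, ← mul_sum,
    ← mul_assoc]
  rw [pow_triangle_pred_mul_pow_pred ht (by omega)]

/-- On functions invariant under simultaneous q-dilation, `D^{n-1}(q,t)` agrees with
`t^{n(n+1)/2} D^1(q⁻¹,t⁻¹)`. -/
theorem stmt2 (n : ℕ) (hn : 2 ≤ n) (q t : ℝ)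
    (hq0 : 0 < q) (hq1 : q < 1) (ht0 : 0 < t) (ht1 : t < 1)
    (f : (Fin n → ℂ) → ℂ)
    (hf : ∀ z : Fin n → ℂ, f (fun i => (q : ℂ) * z i) = f z)
    (z : Fin n → ℂ) (hz : ∀ i j : Fin n, i ≠ j → z i ≠ z j) :
    macD n q t (n - 1) f z =
      (t : ℂ) ^ (n * (n + 1) / 2) * (t : ℂ)⁻¹ *
        ∑ i : Fin n,
          (∏ j ∈ Finset.univ.erase i, ((t : ℂ)⁻¹ * z i - z j) / (z i - z j)) *
            f (Function.update z i ((q : ℂ)⁻¹ * z i)) :=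
  stmt2_general n hn q t hq0 ht0 f hf z
end

section
/- Let q, k be real with 0 < q < 1 and 0 < k < 1, set t := q^k, and let λ_1, λ_2 ∈ ℂ satisfy q^{λ_1−λ_2+1+m} ≠ 1 for all m ∈ ℕ. Define f(z_1, z_2) := z_1^{λ_1+k/2} · z_2^{λ_2−k/2} · F_q(k, λ_1−λ_2+k, λ_1−λ_2+1, q^{1−k} z_1/z_2) for real z_1, z_2 > 0, where z^c := exp(c · log z). Then for all real z_1, z_2 with 0 < z_1 < t z_2, f satisfies the rank-one Macdonald difference equation: t·[ ((t z_1 − z_2)/(z_1 − z_2))·f(q z_1, z_2) + ((t z_2 − z_1)/(z_2 − z_1))·f(z_1, q z_2) ] = q^{3k/2}·(q^{λ_1} + q^{λ_2})·f(z_1, z_2). -/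
/-- `q^x := exp(x·log q)` for real `q > 0` and complex `x`. -/
noncomputable def qpow (q : ℝ) (x : ℂ) : ℂ := Complex.exp (x * Real.log q)

/-- The basic hypergeometric series
`F_q(a,b,c,z) = Σ_m [∏_{l<m} (1-q^{a+l})(1-q^{b+l})/((1-q^{1+l})(1-q^{c+l}))] z^m`. -/
noncomputable def qF (q : ℝ) (a b c z : ℂ) : ℂ :=
  ∑' m : ℕ, (∏ l ∈ Finset.range m,
    ((1 - qpow q (a + l)) * (1 - qpow q (b + l)) /
      ((1 - qpow q (1 + l)) * (1 - qpow q (c + l))))) * z ^ m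

/-! The monomial prefactor of `f` only picks up constants under `z_i ↦ q z_i`, so after
dividing it out and writing `x = q^{1-k} z₁/z₂`, the difference equation becomes the
three-term contiguity relation
`q^{λ₁}(q - t²x) F(qx) + q^{λ₂}(q - x) F(x/q) = (q^{λ₁}+q^{λ₂})(q - tx) F(x)`
for `F = F_q(k, λ₁-λ₂+k, λ₁-λ₂+1, ·)`. Multiplying by `q` shifts the coefficient of `x^{m+1}`
onto that of `x^m`, so the relation reduces to the ratio `c_{m+1}/c_m` of consecutive
coefficients of `F`; this is where `q^{λ₁-λ₂+1+m} ≠ 1` enters, and `z₁ < t z₂` is `|x| < q`,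
which keeps `F(qx)` convergent. -/

open Filter Topology

lemma qpow_add (q : ℝ) (x y : ℂ) : qpow q (x + y) = qpow q x * qpow q y := by
  rw [qpow, add_mul, Complex.exp_add, qpow, qpow]

lemma qpow_sub (q : ℝ) (x y : ℂ) : qpow q (x - y) = qpow q x / qpow q y := by
  rw [qpow, sub_mul, Complex.exp_sub, qpow, qpow]

lemma qpow_natCast_mul (q : ℝ) (n : ℕ) (x : ℂ) : qpow q (n * x) = qpow q x ^ n := by
  rw [qpow, mul_assoc, Complex.exp_nat_mul, qpow]

lemma qpow_ne_zero (q : ℝ) (x : ℂ) : qpow q x ≠ 0 := Complex.exp_ne_zero _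

lemma qpow_ofReal {q : ℝ} (hq : 0 < q) (r : ℝ) : qpow q r = ((q ^ r : ℝ) : ℂ) := by
  rw [Real.rpow_def_of_pos hq, qpow, ← Complex.ofReal_mul, ← Complex.ofReal_exp, mul_comm]

lemma qpow_natCast {q : ℝ} (hq : 0 < q) (m : ℕ) : qpow q m = (q : ℂ) ^ m := by
  rw [qpow, Complex.exp_nat_mul, ← Complex.ofReal_exp, Real.exp_log hq]

lemma qpow_one {q : ℝ} (hq : 0 < q) : qpow q 1 = q := by
  simpa using qpow_natCast hq 1

lemma qpow_add_natCast {q : ℝ} (hq : 0 < q) (x : ℂ) (m : ℕ) :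
    qpow q (x + m) = qpow q x * (q : ℂ) ^ m := by
  rw [qpow_add, qpow_natCast hq]

lemma exp_mul_log_mul {q : ℝ} (hq : 0 < q) {w : ℝ} (hw : 0 < w) (x : ℂ) :
    Complex.exp (x * Real.log (q * w)) = qpow q x * Complex.exp (x * Real.log w) := by
  rw [Real.log_mul hq.ne' hw.ne', qpow, ← Complex.exp_add]
  push_cast
  ring_nf

noncomputable def qratio (q : ℝ) (a b c : ℂ) (l : ℕ) : ℂ :=
  (1 - qpow q (a + l)) * (1 - qpow q (b + l)) / ((1 - qpow q (1 + l)) * (1 - qpow q (c + l)))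

noncomputable def qcoef (q : ℝ) (a b c : ℂ) (m : ℕ) : ℂ :=
  ∏ l ∈ Finset.range m, qratio q a b c l

lemma qcoef_succ (q : ℝ) (a b c : ℂ) (m : ℕ) :
    qcoef q a b c (m + 1) = qcoef q a b c m * qratio q a b c m :=
  Finset.prod_range_succ _ _

lemma tendsto_qpow_add_natCast {q : ℝ} (hq0 : 0 < q) (hq1 : q < 1) (x : ℂ) :
    Tendsto (fun m : ℕ => qpow q (x + m)) atTop (𝓝 0) := by
  have hq : ‖(q : ℂ)‖ < 1 := by rwa [Complex.norm_real, Real.norm_of_nonneg hq0.le]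
  simpa [qpow_add_natCast hq0] using (tendsto_pow_atTop_nhds_zero_of_norm_lt_one hq).const_mul _

lemma tendsto_qratio {q : ℝ} (hq0 : 0 < q) (hq1 : q < 1) (a b c : ℂ) :
    Tendsto (qratio q a b c) atTop (𝓝 1) := by
  have h x : Tendsto (fun m : ℕ => 1 - qpow q (x + m)) atTop (𝓝 1) := by
    simpa using (tendsto_qpow_add_natCast hq0 hq1 x).const_sub 1
  convert ((h a).mul (h b)).div ((h 1).mul (h c)) (by norm_num) using 2
  · rfl
  · norm_num

lemma summable_qcoef_mul_pow {q : ℝ} (hq0 : 0 < q) (hq1 : q < 1) (a b c : ℂ) {z : ℂ}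
    (hz : ‖z‖ < 1) : Summable fun m => qcoef q a b c m * z ^ m := by
  refine summable_of_ratio_norm_eventually_le (r := (1 + ‖z‖) / 2) (by linarith) ?_
  have hlim : Tendsto (fun m => ‖qratio q a b c m * z‖) atTop (𝓝 ‖z‖) := by
    simpa using ((tendsto_qratio hq0 hq1 a b c).mul_const z).norm
  filter_upwards [hlim.eventually_lt_const (by linarith : ‖z‖ < (1 + ‖z‖) / 2)] with m hm
  rw [qcoef_succ, pow_succ, mul_mul_mul_comm, norm_mul, mul_comm _ ‖_ * _‖]
  gcongr

lemma qcoef_succ_mul {q : ℝ} {a b c : ℂ} {m : ℕ} (h1 : 1 - qpow q (1 + m) ≠ 0)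
    (hc : 1 - qpow q (c + m) ≠ 0) :
    qcoef q a b c (m + 1) * ((1 - qpow q (1 + m)) * (1 - qpow q (c + m))) =
      qcoef q a b c m * ((1 - qpow q (a + m)) * (1 - qpow q (b + m))) := by
  rw [qcoef_succ, qratio, mul_assoc, div_mul_cancel₀ _ (mul_ne_zero h1 hc)]

lemma contiguity_term {K : Type*} [Field K] {A B S Q β γ x c₀ c₁ : K} {m : ℕ} (hQ : Q ≠ 0)
    (hβ : B * β = A * S) (hγ : B * γ = A * Q)
    (hc : c₁ * ((1 - Q * Q ^ m) * (1 - γ * Q ^ m)) =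
      c₀ * ((1 - S * Q ^ m) * (1 - β * Q ^ m))) :
    Q * (c₁ * (A * (Q * x) ^ (m + 1) + B * (x / Q) ^ (m + 1) - (A + B) * x ^ (m + 1))) =
      x * (c₀ * (A * S ^ 2 * (Q * x) ^ m + B * (x / Q) ^ m - (A + B) * S * x ^ m)) := by
  rw [div_pow, div_pow, mul_pow, mul_pow]
  field_simp
  linear_combination (Q * Q ^ m * x ^ (m + 1)) * (B * hc + c₁ * (1 - Q * Q ^ m) * Q ^ m * hγ -
    c₀ * (1 - S * Q ^ m) * Q ^ m * hβ)

theorem qF_contiguity {q : ℝ} (hq0 : 0 < q) (hq1 : q < 1) (a lam1 lam2 : ℂ)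
    (hnd : ∀ m : ℕ, qpow q (lam1 - lam2 + 1 + m) ≠ 1) {x : ℂ} (hx : ‖x‖ < q) :
    qpow q lam1 * (q - qpow q a ^ 2 * x) * qF q a (lam1 - lam2 + a) (lam1 - lam2 + 1) (q * x) +
        qpow q lam2 * (q - x) * qF q a (lam1 - lam2 + a) (lam1 - lam2 + 1) (x / q) =
      (qpow q lam1 + qpow q lam2) * (q - qpow q a * x) *
        qF q a (lam1 - lam2 + a) (lam1 - lam2 + 1) x := by
  have hβ : qpow q lam2 * qpow q (lam1 - lam2 + a) = qpow q lam1 * qpow q a := by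
    rw [← qpow_add, ← qpow_add]
    ring_nf
  have hγ : qpow q lam2 * qpow q (lam1 - lam2 + 1) = qpow q lam1 * q := by
    rw [← qpow_one hq0, ← qpow_add, ← qpow_add]
    ring_nf
  set b := lam1 - lam2 + a
  set c := lam1 - lam2 + 1
  set A := qpow q lam1
  set B := qpow q lam2
  set S := qpow q a
  set Q : ℂ := (q : ℂ)
  set F := qF q a b c
  have hQ : Q ≠ 0 := Complex.ofReal_ne_zero.mpr hq0.ne'
  have hnQ : ‖Q‖ = q := by rw [Complex.norm_real, Real.norm_of_nonneg hq0.le]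
  have summable {z : ℂ} (hz : ‖z‖ < 1) := summable_qcoef_mul_pow hq0 hq1 a b c hz
  have hsQx := summable (z := Q * x) (by rw [norm_mul, hnQ]; nlinarith [norm_nonneg x])
  have hsxQ := summable (z := x / Q) (by rwa [norm_div, hnQ, div_lt_one hq0])
  have hsx := summable (z := x) (hx.trans hq1)
  have hsum (u v w : ℂ) : HasSum
      (fun m => qcoef q a b c m * (u * (Q * x) ^ m + v * (x / Q) ^ m - w * x ^ m))
      (u * F (Q * x) + v * F (x / Q) - w * F x) := by
    refine (((hsQx.hasSum.mul_left u).add (hsxQ.hasSum.mul_left v)).sub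
      (hsx.hasSum.mul_left w)).congr_fun fun m => ?_
    ring
  have hT := (hsum A B (A + B)).mul_left Q
  have hU := (hsum (A * S ^ 2) B ((A + B) * S)).mul_left x
  have hshift := (hasSum_nat_add_iff' 1).mpr hT
  simp only [Finset.range_one, Finset.sum_singleton, pow_zero, mul_one, sub_self, mul_zero,
    sub_zero] at hshift
  have hcoef (m : ℕ) : qcoef q a b c (m + 1) * ((1 - Q * Q ^ m) * (1 - qpow q c * Q ^ m)) =
      qcoef q a b c m * ((1 - S * Q ^ m) * (1 - qpow q b * Q ^ m)) := by
    have h1 : 1 - qpow q (1 + m) ≠ 0 := by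
      rw [qpow_add_natCast hq0, qpow_one hq0, ← pow_succ', sub_ne_zero, ne_comm]
      exact_mod_cast (pow_lt_one₀ hq0.le hq1 m.succ_ne_zero).ne
    simpa only [qpow_add_natCast hq0, qpow_one hq0] using
      qcoef_succ_mul h1 (sub_ne_zero.mpr (hnd m).symm)
  have key := hU.unique (hshift.congr_fun fun m => (contiguity_term hQ hβ hγ (hcoef m)).symm)
  linear_combination -key

theorem qF_contiguity_homogeneous {q : ℝ} (hq0 : 0 < q) (hq1 : q < 1) (a lam1 lam2 : ℂ)
    (hnd : ∀ m : ℕ, qpow q (lam1 - lam2 + 1 + m) ≠ 1) {x z1 z2 : ℂ} (hx : ‖x‖ < q)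
    (hxz : x * z2 * qpow q a = q * z1) :
    qpow q lam1 * qpow q a * (z2 - qpow q a * z1) *
          qF q a (lam1 - lam2 + a) (lam1 - lam2 + 1) (q * x) +
        qpow q lam2 * (qpow q a * z2 - z1) * qF q a (lam1 - lam2 + a) (lam1 - lam2 + 1) (x / q) =
      (qpow q lam1 + qpow q lam2) * qpow q a * (z2 - z1) *
        qF q a (lam1 - lam2 + a) (lam1 - lam2 + 1) x := by
  have core := qF_contiguity hq0 hq1 a lam1 lam2 hnd hx
  set F := qF q a (lam1 - lam2 + a) (lam1 - lam2 + 1)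
  refine mul_left_cancel₀ (Complex.ofReal_ne_zero.mpr hq0.ne') ?_
  linear_combination (z2 * qpow q a) * core + (qpow q lam1 * qpow q a ^ 2 * F (q * x) +
    qpow q lam2 * F (x / q) - (qpow q lam1 + qpow q lam2) * qpow q a * F x) * hxz

lemma norm_qpow_one_sub_mul_div_lt {q k z1 z2 : ℝ} (hq : 0 < q) (hz1 : 0 ≤ z1) (hz2 : 0 < z2)
    (h : z1 < q ^ k * z2) : ‖qpow q (1 - k) * z1 / z2‖ < q := by
  rw [← Complex.ofReal_one, ← Complex.ofReal_sub, qpow_ofReal hq, ← Complex.ofReal_mul,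
    ← Complex.ofReal_div, Complex.norm_real, Real.norm_of_nonneg (by positivity),
    div_lt_iff₀ hz2]
  calc q ^ (1 - k) * z1 < q ^ (1 - k) * (q ^ k * z2) := by gcongr
    _ = q * z2 := by rw [← mul_assoc, ← Real.rpow_add hq, sub_add_cancel, Real.rpow_one]

theorem stmt3_general (q k t : ℝ) (hq0 : 0 < q) (hq1 : q < 1) (hk0 : 0 < k)
    (ht : t = q ^ k) (lam1 lam2 : ℂ)
    (hnd : ∀ m : ℕ, qpow q (lam1 - lam2 + 1 + m) ≠ 1)
    (f : ℝ → ℝ → ℂ)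
    (hf : ∀ w1 w2 : ℝ, 0 < w1 → 0 < w2 →
      f w1 w2 = Complex.exp ((lam1 + (k : ℂ) / 2) * Real.log w1) *
        Complex.exp ((lam2 - (k : ℂ) / 2) * Real.log w2) *
        qF q k (lam1 - lam2 + (k : ℂ)) (lam1 - lam2 + 1) (qpow q (1 - k) * w1 / w2))
    (z1 z2 : ℝ) (hz1 : 0 < z1) (hz12 : z1 < t * z2) :
    (t : ℂ) * (((t : ℂ) * (z1 : ℂ) - (z2 : ℂ)) / ((z1 : ℂ) - (z2 : ℂ)) * f (q * z1) z2 +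
        ((t : ℂ) * (z2 : ℂ) - (z1 : ℂ)) / ((z2 : ℂ) - (z1 : ℂ)) * f z1 (q * z2)) =
      qpow q (3 * k / 2) * (qpow q lam1 + qpow q lam2) * f z1 z2 := by
  subst ht
  have hz2 : 0 < z2 := pos_of_mul_pos_right (hz1.trans hz12) (by positivity)
  have hz12' : (z1 : ℂ) ≠ z2 :=
    mod_cast (hz12.trans (mul_lt_of_lt_one_left hz2 (Real.rpow_lt_one hq0.le hq1 hk0))).ne
  have hx_mul : qpow q (1 - k) * ((q * z1 : ℝ) : ℂ) / z2 = q * (qpow q (1 - k) * z1 / z2) := by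
    push_cast
    ring
  have hx_div : qpow q (1 - k) * z1 / ((q * z2 : ℝ) : ℂ) = qpow q (1 - k) * z1 / z2 / q := by
    push_cast
    ring
  have hxz : qpow q (1 - k) * z1 / z2 * z2 * qpow q k = q * z1 := by
    rw [div_mul_cancel₀ _ (mod_cast hz2.ne'), mul_right_comm, ← qpow_add, sub_add_cancel,
      qpow_one hq0]
  have hz := qF_contiguity_homogeneous hq0 hq1 k lam1 lam2 hnd
    (norm_qpow_one_sub_mul_div_lt hq0 hz1.le hz2 hz12) hxz
  rw [hf _ _ (mul_pos hq0 hz1) hz2, hf _ _ hz1 (mul_pos hq0 hz2), hf _ _ hz1 hz2,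
    exp_mul_log_mul hq0 hz1, exp_mul_log_mul hq0 hz2, hx_mul, hx_div]
  rw [qpow_add q lam1, qpow_sub q lam2]
  set s := qpow q (k / 2)
  have hk : qpow q k = s ^ 2 := by
    rw [← qpow_natCast_mul]
    ring_nf
  have h3k : qpow q (3 * k / 2) = s ^ 3 := by
    rw [← qpow_natCast_mul]
    ring_nf
  rw [← qpow_ofReal hq0, hk, h3k]
  rw [hk] at hz
  set x := qpow q (1 - k) * z1 / z2
  set F := qF q k (lam1 - lam2 + k) (lam1 - lam2 + 1)
  have hs : s ≠ 0 := qpow_ne_zero q _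
  field_simp [sub_ne_zero.mpr hz12', sub_ne_zero.mpr hz12'.symm]
  linear_combination ((z1 : ℂ) - z2) * hz

/-- The rank-one Macdonald difference equation for the q-hypergeometric solution
`f(z₁,z₂) = z₁^{λ₁+k/2} z₂^{λ₂-k/2} F_q(k, λ₁-λ₂+k, λ₁-λ₂+1, q^{1-k} z₁/z₂)`. -/
theorem stmt3 (q k t : ℝ) (hq0 : 0 < q) (hq1 : q < 1) (hk0 : 0 < k) (hk1 : k < 1)
    (ht : t = q ^ k) (lam1 lam2 : ℂ)
    (hnd : ∀ m : ℕ, qpow q (lam1 - lam2 + 1 + m) ≠ 1)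
    (f : ℝ → ℝ → ℂ)
    (hf : ∀ w1 w2 : ℝ, 0 < w1 → 0 < w2 →
      f w1 w2 = Complex.exp ((lam1 + (k : ℂ) / 2) * Real.log w1) *
        Complex.exp ((lam2 - (k : ℂ) / 2) * Real.log w2) *
        qF q k (lam1 - lam2 + (k : ℂ)) (lam1 - lam2 + 1) (qpow q (1 - k) * w1 / w2))
    (z1 z2 : ℝ) (hz1 : 0 < z1) (hz12 : z1 < t * z2) :
    (t : ℂ) * (((t : ℂ) * (z1 : ℂ) - (z2 : ℂ)) / ((z1 : ℂ) - (z2 : ℂ)) * f (q * z1) z2 +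
        ((t : ℂ) * (z2 : ℂ) - (z1 : ℂ)) / ((z2 : ℂ) - (z1 : ℂ)) * f z1 (q * z2)) =
      qpow q (3 * k / 2) * (qpow q lam1 + qpow q lam2) * f z1 z2 :=
  stmt3_general q k t hq0 hq1 hk0 ht lam1 lam2 hnd f hf z1 z2 hz1 hz12
end

section
/- Let n ≥ 2, let q, k be real with 0 < q < 1 and 0 < k < 1, and set t := q^k. Let y = (y_1,…,y_n) ∈ ℂ^n have nonzero pairwise distinct coordinates with q y_i ≠ y_j for all i ≠ j, and assume q^{k+m} y_l ≠ y_s for all l ≠ s and all integers m ≥ −1. Define Δ(y) := ∏_{1 ≤ l < s ≤ n} (y_l/y_s ; q)_∞ (y_s/y_l ; q)_∞ / [ (q^k y_l/y_s ; q)_∞ (q^k y_s/y_l ; q)_∞ ]. Then for every function f : ℂ^n → ℂ, Σ_{i=1}^n [∏_{j ≠ i} (t^{−1} q y_i − y_j)/(q y_i − y_j)] · Δ(y^{(i)}) · f(y^{(i)}) = t^{1−n} · Δ(y) · Σ_{i=1}^n [∏_{j ≠ i} (t y_i − y_j)/(y_i − y_j)] · f(y^{(i)}), where y^{(i)} denotes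 y with y_i replaced by q y_i. -/
/-- The q-Pochhammer symbol `(z;q)_∞ = ∏_{i=0}^∞ (1 - z qⁱ)`. -/
noncomputable def qPochInf (q : ℝ) (z : ℂ) : ℂ := ∏' i : ℕ, (1 - z * (q : ℂ) ^ i)

/-- `Δ(y) = ∏_{l<s} (y_l/y_s;q)_∞ (y_s/y_l;q)_∞ / [(q^k y_l/y_s;q)_∞ (q^k y_s/y_l;q)_∞]`. -/
noncomputable def qDelta (n : ℕ) (q k : ℝ) (y : Fin n → ℂ) : ℂ :=
  ∏ l : Fin n, ∏ s ∈ Finset.Ioi l,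
    (qPochInf q (y l / y s) * qPochInf q (y s / y l)) /
      (qPochInf q (qpow q k * y l / y s) * qPochInf q (qpow q k * y s / y l))

/-!
Both sides are sums of multiples of `f (y^{(i)})`, so it suffices to match the coefficients for
each `i`. `Δ` is a product of symmetric pair factors, and `y_i ↦ q y_i` changes only those that
involve `y_i`. Peeling one factor off each Pochhammer symbol with `(z;q)_∞ = (1 - z) (qz;q)_∞`
shows that each of them gets multiplied by
`(q y_i - y_j)(t y_i - y_j) / ((y_i - y_j)(q y_i - t y_j))`; the condition `q^{k+m} y_l ≠ y_s`
for `m ≥ -1` keeps the Pochhammer symbols in the denominators nonzero. Against the left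
coefficient `(t⁻¹ q y_i - y_j) / (q y_i - y_j)` this leaves `t⁻¹ (t y_i - y_j) / (y_i - y_j)`,
one factor `t⁻¹` for each `j ≠ i`.
-/

open Finset Function

section QPochhammer

variable {q : ℝ}

lemma summable_norm_neg_mul_pow (hq : |q| < 1) (z : ℂ) :
    Summable fun i : ℕ => ‖-(z * (q : ℂ) ^ i)‖ := by
  simpa [norm_mul, norm_pow] using (summable_geometric_of_lt_one (abs_nonneg q) hq).mul_left ‖z‖

lemma multipliable_one_sub_mul_pow (hq : |q| < 1) (z : ℂ) :
    Multipliable fun i : ℕ => 1 - z * (q : ℂ) ^ i := by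
  simpa only [sub_eq_add_neg] using
    multipliable_one_add_of_summable (summable_norm_neg_mul_pow hq z)

lemma qPochInf_ne_zero (hq : |q| < 1) {z : ℂ} (hz : ∀ i : ℕ, z * (q : ℂ) ^ i ≠ 1) :
    qPochInf q z ≠ 0 := by
  simp only [qPochInf, sub_eq_add_neg]
  refine tprod_one_add_ne_zero_of_summable (fun i => ?_) (summable_norm_neg_mul_pow hq z)
  rw [← sub_eq_add_neg, sub_ne_zero]
  exact (hz i).symm

lemma qPochInf_eq_one_sub_mul (hq : |q| < 1) (z : ℂ) :
    qPochInf q z = (1 - z) * qPochInf q (q * z) := by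
  have shift (i : ℕ) : 1 - z * (q : ℂ) ^ (i + 1) = 1 - q * z * (q : ℂ) ^ i := by ring
  have h := tprod_eq_zero_mul' (f := fun i => 1 - z * (q : ℂ) ^ i)
    ((multipliable_one_sub_mul_pow hq (q * z)).congr fun i => (shift i).symm)
  rw [qPochInf, h, qPochInf, pow_zero, mul_one]
  simp only [shift]

end QPochhammer

section PairProducts

variable {ι M : Type*} [LinearOrder ι] [Fintype ι] [LocallyFiniteOrderTop ι]
  [LocallyFiniteOrderBot ι] [CommMonoid M]

lemma prod_prod_Ioi_eq_prod_erase_mul (g : ι → ι → M) (hg : ∀ a b, g a b = g b a) (i : ι) :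
    ∏ l, ∏ s ∈ Ioi l, g l s =
      (∏ j ∈ univ.erase i, g i j) * ∏ l ∈ univ.erase i, ∏ s ∈ (Ioi l).erase i, g l s := by
  have row (l : ι) :
      ∏ s ∈ Ioi l, g l s = (if l < i then g i l else 1) * ∏ s ∈ (Ioi l).erase i, g l s := by
    split_ifs with h
    · rw [hg, mul_prod_erase _ _ (mem_Ioi.2 h)]
    · rw [one_mul, erase_eq_of_notMem (by simpa using h)]
  have column : ∏ l ∈ univ.erase i, (if l < i then g i l else 1) = ∏ l ∈ Iio i, g i l := by
    rw [← prod_filter]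
    congr 1
    ext l
    simpa using ne_of_lt
  have cross : ∏ j ∈ univ.erase i, g i j = (∏ s ∈ Ioi i, g i s) * ∏ l ∈ Iio i, g i l := by
    rw [← prod_union (disjoint_left.2 fun l h h' => (mem_Ioi.1 h).not_gt (mem_Iio.1 h'))]
    congr 1
    ext l
    simp [ne_comm, lt_or_lt_iff_ne]
  rw [← mul_prod_erase univ _ (mem_univ i), prod_congr rfl fun l _ => row l, prod_mul_distrib,
    column, cross, mul_assoc]

lemma prod_prod_Ioi_update {α : Type*} (G : α → α → M) (hG : ∀ a b, G a b = G b a) (y : ι → α)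
    (i : ι) (v : α) (r : ι → M) (hr : ∀ j ≠ i, G v (y j) = G (y i) (y j) * r j) :
    ∏ l, ∏ s ∈ Ioi l, G (update y i v l) (update y i v s) =
      (∏ l, ∏ s ∈ Ioi l, G (y l) (y s)) * ∏ j ∈ univ.erase i, r j := by
  rw [prod_prod_Ioi_eq_prod_erase_mul _ (fun _ _ => hG _ _) i,
    prod_prod_Ioi_eq_prod_erase_mul _ (fun _ _ => hG _ _) i]
  have row : ∏ j ∈ univ.erase i, G (update y i v i) (update y i v j) =
      (∏ j ∈ univ.erase i, G (y i) (y j)) * ∏ j ∈ univ.erase i, r j := by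
    rw [← prod_mul_distrib]
    refine prod_congr rfl fun j hj => ?_
    rw [update_self, update_of_ne (ne_of_mem_erase hj), hr j (ne_of_mem_erase hj)]
  have rest : ∏ l ∈ univ.erase i, ∏ s ∈ (Ioi l).erase i, G (update y i v l) (update y i v s) =
      ∏ l ∈ univ.erase i, ∏ s ∈ (Ioi l).erase i, G (y l) (y s) :=
    prod_congr rfl fun l hl => prod_congr rfl fun s hs => by
      rw [update_of_ne (ne_of_mem_erase hl), update_of_ne (ne_of_mem_erase hs)]
  rw [row, rest, mul_right_comm]

end PairProducts

lemma qpow_add_intCast {q : ℝ} (hq : 0 < q) (x : ℂ) (m : ℤ) :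
    qpow q (x + m) = qpow q x * (q : ℂ) ^ m := by
  rw [qpow, qpow, add_mul, Complex.exp_add, Complex.exp_int_mul, ← Complex.ofReal_exp,
    Real.exp_log hq]

lemma ofReal_rpow_eq_qpow {q : ℝ} (hq : 0 < q) (x : ℝ) : ((q ^ x : ℝ) : ℂ) = qpow q x := by
  rw [Real.rpow_def_of_pos hq, qpow, Complex.ofReal_exp, Complex.ofReal_mul, mul_comm]

lemma qPochInf_qpow_mul_div_ne_zero {q k : ℝ} (hq0 : 0 < q) (hq1 : q < 1) {a b : ℂ} (hb : b ≠ 0)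
    (e : ℤ) (h : ∀ m : ℤ, e ≤ m → qpow q (k + m) * a ≠ b) :
    qPochInf q (qpow q (k + e) * a / b) ≠ 0 := by
  refine qPochInf_ne_zero (abs_lt.2 ⟨by linarith, hq1⟩) fun i hi => h (e + i) (by omega) ?_
  rw [Int.cast_add, ← add_assoc, qpow_add_intCast hq0, zpow_natCast]
  field_simp at hi
  linear_combination hi

/-- `qDelta n q k y` is definitionally `∏ l, ∏ s ∈ Ioi l, qPairFactor q (qpow q k) (y l) (y s)`. -/
noncomputable def qPairFactor (q : ℝ) (T a b : ℂ) : ℂ :=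
  qPochInf q (a / b) * qPochInf q (b / a) / (qPochInf q (T * a / b) * qPochInf q (T * b / a))

lemma qPairFactor_comm (q : ℝ) (T a b : ℂ) : qPairFactor q T a b = qPairFactor q T b a := by
  rw [qPairFactor, qPairFactor, mul_comm (qPochInf q (a / b)), mul_comm (qPochInf q (T * a / b))]

lemma qPairFactor_mul_left {q : ℝ} (hq : |q| < 1) (hq0 : q ≠ 0) {T a b : ℂ} (ha : a ≠ 0)
    (hb : b ≠ 0) (hab : a ≠ b) (h₁ : qPochInf q (T * a / b) ≠ 0)
    (h₂ : qPochInf q (T * b / (q * a)) ≠ 0) :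
    qPairFactor q T (q * a) b =
      qPairFactor q T a b * ((q * a - b) * (T * a - b) / ((a - b) * (q * a - T * b))) := by
  have hq0' : (q : ℂ) ≠ 0 := Complex.ofReal_ne_zero.2 hq0
  have r₁ : qPochInf q (a / b) = (1 - a / b) * qPochInf q (q * a / b) := by
    rw [qPochInf_eq_one_sub_mul hq, mul_div_assoc]
  have r₂ : qPochInf q (b / (q * a)) = (1 - b / (q * a)) * qPochInf q (b / a) := by
    rw [qPochInf_eq_one_sub_mul hq]
    field_simp
  have r₃ : qPochInf q (T * a / b) = (1 - T * a / b) * qPochInf q (T * (q * a) / b) := by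
    rw [qPochInf_eq_one_sub_mul hq]
    ring_nf
  have r₄ : qPochInf q (T * b / (q * a)) = (1 - T * b / (q * a)) * qPochInf q (T * b / a) := by
    rw [qPochInf_eq_one_sub_mul hq]
    field_simp
  rw [r₃] at h₁
  rw [r₄] at h₂
  obtain ⟨hTa, hU⟩ := mul_ne_zero_iff.1 h₁
  obtain ⟨hTb, hV⟩ := mul_ne_zero_iff.1 h₂
  have hTa' : b - a * T ≠ 0 := by
    rw [show b - a * T = b * (1 - T * a / b) by field_simp]
    exact mul_ne_zero hb hTa
  have hTb' : q * a - b * T ≠ 0 := by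
    rw [show q * a - b * T = q * a * (1 - T * b / (q * a)) by field_simp]
    exact mul_ne_zero (mul_ne_zero hq0' ha) hTb
  rw [qPairFactor, qPairFactor, r₁, r₂, r₃, r₄]
  field_simp [sub_ne_zero.2 hab]
  ring

lemma qDelta_update_mul_left {n : ℕ} {q k : ℝ} (hq : |q| < 1) (hq0 : q ≠ 0) {y : Fin n → ℂ}
    (hy0 : ∀ j, y j ≠ 0) (i : Fin n) (hyd : ∀ j ≠ i, y i ≠ y j)
    (h₁ : ∀ j ≠ i, qPochInf q (qpow q k * y i / y j) ≠ 0)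
    (h₂ : ∀ j ≠ i, qPochInf q (qpow q k * y j / (q * y i)) ≠ 0) :
    qDelta n q k (update y i (q * y i)) = qDelta n q k y * ∏ j ∈ univ.erase i,
      (q * y i - y j) * (qpow q k * y i - y j) / ((y i - y j) * (q * y i - qpow q k * y j)) :=
  prod_prod_Ioi_update (qPairFactor q (qpow q k)) (qPairFactor_comm q _) y i _ _ fun j hj =>
    qPairFactor_mul_left hq hq0 (hy0 i) (hy0 j) (hyd j hj) (h₁ j hj) (h₂ j hj)

lemma prod_coeff_mul_prod_qDelta_ratio {ι : Type*} [Fintype ι] [DecidableEq ι] {q t : ℂ}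
    (ht : t ≠ 0) (y : ι → ℂ) (i : ι) (hyd : ∀ j ≠ i, y i ≠ y j) (hyq : ∀ j ≠ i, q * y i ≠ y j)
    (hqt : ∀ j ≠ i, q * y i ≠ t * y j) :
    (∏ j ∈ univ.erase i, (t⁻¹ * (q * y i) - y j) / (q * y i - y j)) *
        ∏ j ∈ univ.erase i,
          (q * y i - y j) * (t * y i - y j) / ((y i - y j) * (q * y i - t * y j)) =
      (t ^ (Fintype.card ι - 1))⁻¹ * ∏ j ∈ univ.erase i, (t * y i - y j) / (y i - y j) := by
  rw [← prod_mul_distrib, ← card_univ, ← card_erase_of_mem (mem_univ i), ← inv_pow, ← prod_const,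
    ← prod_mul_distrib]
  refine prod_congr rfl fun j hj => ?_
  have hji := ne_of_mem_erase hj
  field_simp [sub_ne_zero.2 (hyd j hji), sub_ne_zero.2 (hyq j hji), sub_ne_zero.2 (hqt j hji)]

theorem stmt9_general (n : ℕ) (q k t : ℝ) (hq0 : 0 < q) (hq1 : q < 1)
    (ht : t = q ^ k)
    (y : Fin n → ℂ) (hy0 : ∀ i, y i ≠ 0) (hyd : ∀ i j, i ≠ j → y i ≠ y j)
    (hyq : ∀ i j, i ≠ j → (q : ℂ) * y i ≠ y j)
    (hnd : ∀ l s, l ≠ s → ∀ m : ℤ, -1 ≤ m → qpow q ((k : ℂ) + m) * y l ≠ y s)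
    (f : (Fin n → ℂ) → ℂ) :
    ∑ i : Fin n,
        (∏ j ∈ Finset.univ.erase i,
          ((t : ℂ)⁻¹ * ((q : ℂ) * y i) - y j) / ((q : ℂ) * y i - y j)) *
          qDelta n q k (Function.update y i ((q : ℂ) * y i)) *
          f (Function.update y i ((q : ℂ) * y i)) =
      ((t : ℂ) ^ (n - 1))⁻¹ * qDelta n q k y *
        ∑ i : Fin n,
          (∏ j ∈ Finset.univ.erase i, ((t : ℂ) * y i - y j) / (y i - y j)) *
            f (Function.update y i ((q : ℂ) * y i)) := by
  have hT : (t : ℂ) = qpow q k := by rw [ht, ofReal_rpow_eq_qpow hq0]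
  have hqpow_pred : qpow q (k + ((-1 : ℤ) : ℂ)) = qpow q k / q := by
    rw [qpow_add_intCast hq0, zpow_neg_one, div_eq_mul_inv]
  rw [mul_sum]
  refine sum_congr rfl fun i _ => ?_
  have hΔ := qDelta_update_mul_left (abs_lt.2 ⟨by linarith, hq1⟩) hq0.ne' hy0 i
    (fun j hj => hyd i j hj.symm)
    (fun j hj => by
      simpa using qPochInf_qpow_mul_div_ne_zero hq0 hq1 (hy0 j) 0 fun m hm =>
        hnd i j hj.symm m (by omega))
    (fun j hj => by
      have h := qPochInf_qpow_mul_div_ne_zero hq0 hq1 (hy0 i) (-1) (hnd j i hj)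
      rwa [hqpow_pred, div_mul_eq_mul_div, div_div] at h)
  have hqt (j : Fin n) (hj : j ≠ i) : (q : ℂ) * y i ≠ t * y j := fun h => by
    apply hnd j i hj (-1) le_rfl
    rw [hqpow_pred, ← hT, div_mul_eq_mul_div, ← h,
      mul_div_cancel_left₀ _ (Complex.ofReal_ne_zero.2 hq0.ne')]
  have hcoeff := prod_coeff_mul_prod_qDelta_ratio (hT ▸ Complex.exp_ne_zero _) y i
    (fun j hj => hyd i j hj.symm) (fun j hj => hyq i j hj.symm) hqt
  rw [Fintype.card_fin] at hcoeff
  rw [hΔ, ← hT]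
  linear_combination qDelta n q k y * f (update y i (q * y i)) * hcoeff

/-- The gauge identity
`[Σ_i T_{q,y_i} ∏_{j≠i} (t⁻¹y_i-y_j)/(y_i-y_j)] ∘ Δ
  = Δ ∘ t^{1-n} [Σ_i ∏_{j≠i} (t y_i-y_j)/(y_i-y_j) T_{q,y_i}]`. -/
theorem stmt9 (n : ℕ) (hn : 2 ≤ n) (q k t : ℝ) (hq0 : 0 < q) (hq1 : q < 1)
    (hk0 : 0 < k) (hk1 : k < 1) (ht : t = q ^ k)
    (y : Fin n → ℂ) (hy0 : ∀ i, y i ≠ 0) (hyd : ∀ i j, i ≠ j → y i ≠ y j)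
    (hyq : ∀ i j, i ≠ j → (q : ℂ) * y i ≠ y j)
    (hnd : ∀ l s, l ≠ s → ∀ m : ℤ, -1 ≤ m → qpow q ((k : ℂ) + m) * y l ≠ y s)
    (f : (Fin n → ℂ) → ℂ) :
    ∑ i : Fin n,
        (∏ j ∈ Finset.univ.erase i,
          ((t : ℂ)⁻¹ * ((q : ℂ) * y i) - y j) / ((q : ℂ) * y i - y j)) *
          qDelta n q k (Function.update y i ((q : ℂ) * y i)) *
          f (Function.update y i ((q : ℂ) * y i)) =
      ((t : ℂ) ^ (n - 1))⁻¹ * qDelta n q k y *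
        ∑ i : Fin n,
          (∏ j ∈ Finset.univ.erase i, ((t : ℂ) * y i - y j) / (y i - y j)) *
            f (Function.update y i ((q : ℂ) * y i)) :=
  stmt9_general n q k t hq0 hq1 ht y hy0 hyd hyq hnd f
end
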